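/- arXiv:1201.2977 — 4 statements merged into one kernel-verified Lean document; each statement's English description precedes it below -/
import Mathlib

section
/- Let {z_I}_{I⊆[n]} be supermodular real parameters with z_∅ = 0, let P = P_n({z_I}), and let π = π_1|⋯|π_k be an ordered partition of [n]. Then the face P_π of P maximizing a linear functional of type π equals { x ∈ P : Σ_{i∈π_j} x_i = z_{π_1∪⋯∪π_j} − z_{π_1∪⋯∪π_{j−1}} for all 1 ≤ j ≤ k }, and under the coordinate identification ℝ^n ≅ ℝ^{π_1} × ⋯ × ℝ^{π_k} this face equals the product P_1 × ⋯ × P_k, where P_j ⊆ ℝ^{π_j} is the polytope P({z^j_I}_{I⊆π_j}) defined by the parameters z^j_I = z_{π_1∪⋯∪π_{j−1}∪I} − z_{π_1∪⋯∪π_{j−1}} for I ⊆ π_j. -/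
/-- The generalized permutahedron
`P_n({z_I}) = { t ∈ ℝ^n : Σ_i t_i = z_{[n]}, Σ_{i∈I} t_i ≥ z_I for all I }`. -/
def Pz (n : ℕ) (z : Finset (Fin n) → ℝ) : Set (Fin n → ℝ) :=
  {t | ∑ i, t i = z Finset.univ ∧ ∀ I : Finset (Fin n), z I ≤ ∑ i ∈ I, t i}

/-- The union `π_1 ∪ ⋯ ∪ π_j` of the first `j` blocks (inclusive). -/
def unionUpTo {n k : ℕ} (π : Fin k → Finset (Fin n)) (j : Fin k) : Finset (Fin n) :=
  (Finset.univ.filter fun s => s ≤ j).biUnion π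

/-- The union `π_1 ∪ ⋯ ∪ π_{j−1}` of the blocks strictly before `j`. -/
def unionBelow {n k : ℕ} (π : Fin k → Finset (Fin n)) (j : Fin k) : Finset (Fin n) :=
  (Finset.univ.filter fun s => s < j).biUnion π

-- Auxiliary definitions and lemmas
def Ucum {n k : ℕ} (π : Fin k → Finset (Fin n)) (m : ℕ) : Finset (Fin n) :=
  (Finset.univ.filter fun s : Fin k => (s : ℕ) < m).biUnion π

lemma unionBelow_eq_Ucum {n k : ℕ} (π : Fin k → Finset (Fin n)) (j : Fin k) :
    unionBelow π j = Ucum π j.val := by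
  unfold unionBelow Ucum
  ext i
  simp only [Finset.mem_biUnion, Finset.mem_filter, Finset.mem_univ, true_and, Fin.lt_def]

lemma unionUpTo_eq_Ucum {n k : ℕ} (π : Fin k → Finset (Fin n)) (j : Fin k) :
    unionUpTo π j = Ucum π (j.val + 1) := by
  unfold unionUpTo Ucum
  ext i
  simp only [Finset.mem_biUnion, Finset.mem_filter, Finset.mem_univ, true_and, Fin.le_def,
    Nat.lt_succ_iff]

lemma abel_identity (K : ℕ) (C Pf : ℕ → ℝ) (hP0 : Pf 0 = 0) (hPK : Pf K = 0) :
    ∑ m ∈ Finset.range K, C m * (Pf (m + 1) - Pf m)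
      = ∑ m ∈ Finset.range (K - 1), (C m - C (m + 1)) * Pf (m + 1) := by
  cases K with
  | zero => simp
  | succ K' =>
    have h1 : ∑ m ∈ Finset.range (K' + 1), C m * Pf (m + 1)
        = ∑ m ∈ Finset.range K', C m * Pf (m + 1) := by
      rw [Finset.sum_range_succ, hPK, mul_zero, add_zero]
    have h2 : ∑ m ∈ Finset.range (K' + 1), C m * Pf m
        = ∑ m ∈ Finset.range K', C (m + 1) * Pf (m + 1) := by
      rw [Finset.sum_range_succ', hP0, mul_zero, add_zero]
    simp only [mul_sub]
    rw [Finset.sum_sub_distrib, h1, h2, ← Finset.sum_sub_distrib, Nat.succ_sub_one]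
    exact Finset.sum_congr rfl fun m _ => by ring

lemma greedy_exists {n : ℕ} (z : Finset (Fin n) → ℝ) (hz0 : z ∅ = 0)
    (hsuper : ∀ I J : Finset (Fin n), z I + z J ≤ z (I ∪ J) + z (I ∩ J))
    (ρ : Fin n → ℕ) (hρ : Function.Injective ρ) :
    ∃ g : Fin n → ℝ, (∀ I : Finset (Fin n), z I ≤ ∑ i ∈ I, g i) ∧
      ∀ D : Finset (Fin n), (∀ i ∈ D, ∀ i' : Fin n, ρ i' < ρ i → i' ∈ D) →
        ∑ i ∈ D, g i = z D := by
  classical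
  set Dlt : Fin n → Finset (Fin n) := fun i => Finset.univ.filter fun i' => ρ i' < ρ i
    with hDlt
  refine ⟨fun i => z (insert i (Dlt i)) - z (Dlt i), ?_, ?_⟩
  · intro I
    induction I using Finset.strongInductionOn with
    | _ I ih =>
      rcases I.eq_empty_or_nonempty with rfl | hI
      · simp [hz0]
      · obtain ⟨i, hiI, hmax⟩ := Finset.exists_max_image I ρ hI
        have hsub : I ⊆ insert i (Dlt i) := by
          intro i' hi'
          rcases eq_or_ne i' i with rfl | hne'
          · exact Finset.mem_insert_self _ _
          · refine Finset.mem_insert_of_mem ?_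
            simp only [hDlt, Finset.mem_filter, Finset.mem_univ, true_and]
            exact lt_of_le_of_ne (hmax i' hi') fun h => hne' (hρ h)
        have hU : I ∪ Dlt i = insert i (Dlt i) := by
          apply Finset.Subset.antisymm
          · exact Finset.union_subset hsub (Finset.subset_insert _ _)
          · intro i' hi'
            rcases Finset.mem_insert.mp hi' with rfl | h
            · exact Finset.mem_union_left _ hiI
            · exact Finset.mem_union_right _ h
        have hInt : I ∩ Dlt i = I.erase i := by
          ext i'
          simp only [Finset.mem_inter, Finset.mem_erase, hDlt, Finset.mem_filter,
            Finset.mem_univ, true_and]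
          constructor
          · rintro ⟨h1, h2⟩
            exact ⟨fun h => by simp [h] at h2, h1⟩
          · rintro ⟨h1, h2⟩
            exact ⟨h2, lt_of_le_of_ne (hmax i' h2) fun h => h1 (hρ h)⟩
        have hsup := hsuper I (Dlt i)
        rw [hU, hInt] at hsup
        have hih := ih (I.erase i) (Finset.erase_ssubset hiI)
        have hsum := Finset.add_sum_erase I
          (fun i => z (insert i (Dlt i)) - z (Dlt i)) hiI
        linarith
  · intro D
    induction D using Finset.strongInductionOn with
    | _ D ih =>
      intro hdc
      rcases D.eq_empty_or_nonempty with rfl | hD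
      · simp [hz0]
      · obtain ⟨i, hiD, hmax⟩ := Finset.exists_max_image D ρ hD
        have hDlt_eq : Dlt i = D.erase i := by
          ext i'
          simp only [hDlt, Finset.mem_filter, Finset.mem_univ, true_and, Finset.mem_erase]
          constructor
          · intro h
            exact ⟨fun he => by simp [he] at h, hdc i hiD i' h⟩
          · rintro ⟨h1, h2⟩
            exact lt_of_le_of_ne (hmax i' h2) fun h => h1 (hρ h)
        have herase_dc : ∀ i'' ∈ D.erase i, ∀ i''' : Fin n, ρ i''' < ρ i'' → i''' ∈ D.erase i := by
          intro i'' h2 i''' h3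
          have h2' := Finset.mem_of_mem_erase h2
          have hne'' : i'' ≠ i := Finset.ne_of_mem_erase h2
          have hlt : ρ i'' < ρ i := lt_of_le_of_ne (hmax i'' h2') fun h => hne'' (hρ h)
          refine Finset.mem_erase.mpr ⟨?_, hdc i'' h2' i''' h3⟩
          rintro rfl
          omega
        have hih := ih (D.erase i) (Finset.erase_ssubset hiD) herase_dc
        have hsum := Finset.add_sum_erase D
          (fun i => z (insert i (Dlt i)) - z (Dlt i)) hiD
        rw [← hsum, hih, hDlt_eq, Finset.insert_erase hiD]
        ring

/-- Theorem: for supermodular `{z_I}` with `z_∅ = 0`, an ordered partition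
`π = π_1|⋯|π_k` of `[n]`, and a linear functional of type `π`, the face `P_π`
of `P = P_n({z_I})` maximizing it equals
`{x ∈ P : Σ_{i∈π_j} x_i = z_{π_1∪⋯∪π_j} − z_{π_1∪⋯∪π_{j−1}} for all j}`, and
(under `ℝ^n ≅ ℝ^{π_1} × ⋯ × ℝ^{π_k}`) it equals the product `P_1 × ⋯ × P_k`
of the generalized permutahedra with parameters
`z^j_I = z_{π_1∪⋯∪π_{j−1}∪I} − z_{π_1∪⋯∪π_{j−1}}` for `I ⊆ π_j`. -/
theorem face_of_generalized_permutahedron (n k : ℕ)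
    (z : Finset (Fin n) → ℝ) (hz0 : z ∅ = 0)
    (hsuper : ∀ I J : Finset (Fin n), z I + z J ≤ z (I ∪ J) + z (I ∩ J))
    (π : Fin k → Finset (Fin n))
    (hne : ∀ s, (π s).Nonempty)
    (hdisj : ∀ s t, s ≠ t → Disjoint (π s) (π t))
    (hcover : ∀ i : Fin n, ∃ s, i ∈ π s)
    (a : Fin n → ℝ)
    (htype : ∀ s t : Fin k, ∀ i ∈ π s, ∀ j ∈ π t,
      (a i = a j ↔ s = t) ∧ (a i < a j ↔ s < t)) :
    {x ∈ Pz n z | ∀ y ∈ Pz n z, ∑ i, a i * y i ≤ ∑ i, a i * x i} =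
      {x ∈ Pz n z | ∀ j : Fin k,
        ∑ i ∈ π j, x i = z (unionUpTo π j) - z (unionBelow π j)} ∧
    {x ∈ Pz n z | ∀ y ∈ Pz n z, ∑ i, a i * y i ≤ ∑ i, a i * x i} =
      {x : Fin n → ℝ | ∀ j : Fin k,
        (∑ i ∈ π j, x i = z (unionUpTo π j) - z (unionBelow π j)) ∧
        ∀ I ⊆ π j, z (unionBelow π j ∪ I) - z (unionBelow π j) ≤ ∑ i ∈ I, x i} := by
  classical
  -- the key (block index) function
  set key : Fin n → Fin k := fun i => (hcover i).choose with hkeydef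
  have hkeymem : ∀ i, i ∈ π (key i) := fun i => (hcover i).choose_spec
  have hkeyuniq : ∀ (s : Fin k) (i : Fin n), i ∈ π s → s = key i := by
    intro s i hi
    by_contra h
    exact (Finset.disjoint_left.mp (hdisj s (key i) h) hi) (hkeymem i)
  -- the rank function
  set ρ : Fin n → ℕ := fun i => (key i).val * n + i.val with hρdef
  have hρblock : ∀ i i' : Fin n, key i < key i' → ρ i < ρ i' := by
    intro i i' h
    have h1 : (key i).val + 1 ≤ (key i').val := h
    have h2 : i.val < n := i.isLt
    calc ρ i < (key i).val * n + n := by simp only [hρdef]; omega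
      _ = ((key i).val + 1) * n := by ring
      _ ≤ (key i').val * n := Nat.mul_le_mul_right n h1
      _ ≤ ρ i' := Nat.le_add_right _ _
  have hρinj : Function.Injective ρ := by
    intro i i' h
    rcases lt_trichotomy (key i) (key i') with hk | hk | hk
    · exact absurd h (by have := hρblock i i' hk; omega)
    · have : i.val = i'.val := by
        simp only [hρdef, hk] at h
        omega
      exact Fin.val_injective this
    · exact absurd h (by have := hρblock i' i hk; omega)
  have hρkey : ∀ i i' : Fin n, ρ i' < ρ i → key i' ≤ key i := by
    intro i i' h
    by_contra hc
    push_neg at hc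
    have := hρblock i i' hc
    omega
  -- membership in Ucum
  have hmemU : ∀ (m : ℕ) (i : Fin n), i ∈ Ucum π m ↔ (key i).val < m := by
    intro m i
    simp only [Ucum, Finset.mem_biUnion, Finset.mem_filter, Finset.mem_univ, true_and]
    constructor
    · rintro ⟨s, hs, hi⟩
      rwa [hkeyuniq s i hi] at hs
    · intro h
      exact ⟨key i, h, hkeymem i⟩
  have hU0 : Ucum π 0 = ∅ := by
    ext i; simp [hmemU]
  have hUtop : Ucum π k = Finset.univ := by
    ext i
    simp only [Finset.mem_univ, iff_true, hmemU]
    exact (key i).isLt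
  have hUdc : ∀ (m : ℕ), ∀ i ∈ Ucum π m, ∀ i' : Fin n, ρ i' < ρ i → i' ∈ Ucum π m := by
    intro m i hi i' h
    rw [hmemU] at hi ⊢
    have := hρkey i i' h
    omega
  -- successor sums
  have hsum_succ : ∀ (f : Fin n → ℝ) (j : Fin k),
      ∑ i ∈ Ucum π (j.val + 1), f i = ∑ i ∈ Ucum π j.val, f i + ∑ i ∈ π j, f i := by
    intro f j
    have hfil : (Finset.univ.filter fun s : Fin k => (s : ℕ) < j.val + 1)
        = insert j (Finset.univ.filter fun s : Fin k => (s : ℕ) < j.val) := by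
      ext s
      simp only [Finset.mem_filter, Finset.mem_univ, true_and, Finset.mem_insert]
      constructor
      · intro h
        rcases eq_or_ne s j with rfl | hne'
        · exact Or.inl rfl
        · right
          have : s.val ≠ j.val := fun he => hne' (Fin.val_injective he)
          omega
      · rintro (rfl | h) <;> omega
    have hdj : Disjoint (π j) ((Finset.univ.filter fun s : Fin k => (s : ℕ) < j.val).biUnion π) := by
      rw [Finset.disjoint_biUnion_right]
      intro s hs
      have hs' := (Finset.mem_filter.mp hs).2
      exact hdisj j s (by rintro rfl; omega)
    simp only [Ucum]
    rw [hfil, Finset.biUnion_insert, Finset.sum_union hdj]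
    exact add_comm _ _
  -- coefficient function
  set cfun : ℕ → ℝ := fun m => if h : m < k then a ((hne ⟨m, h⟩).choose) else 0 with hcfun
  have hcval : ∀ j : Fin k, ∀ i ∈ π j, a i = cfun j.val := by
    intro j i hi
    simp only [hcfun]
    rw [dif_pos j.isLt]
    have hj : (⟨j.val, j.isLt⟩ : Fin k) = j := rfl
    rw [hj]
    exact ((htype j j i hi _ (hne j).choose_spec).1).mpr rfl
  have hcmono : ∀ m1 m2 : ℕ, m1 < m2 → (h2 : m2 < k) → cfun m1 < cfun m2 := by
    intro m1 m2 h12 h2k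
    have h1k : m1 < k := lt_trans h12 h2k
    simp only [hcfun]
    rw [dif_pos h1k, dif_pos h2k]
    exact ((htype ⟨m1, h1k⟩ ⟨m2, h2k⟩ _ (hne _).choose_spec _ (hne _).choose_spec).2).mpr
      (Fin.mk_lt_mk.mpr h12)
  -- decomposition of the linear functional
  have hlin : ∀ y : Fin n → ℝ, ∑ i, a i * y i = ∑ j : Fin k, cfun j.val * ∑ i ∈ π j, y i := by
    intro y
    have h0 : ∑ i, a i * y i = ∑ i ∈ Ucum π k, a i * y i := by rw [hUtop]
    rw [h0]
    simp only [Ucum]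
    rw [Finset.sum_biUnion (fun s _ t _ hst => hdisj s t hst)]
    rw [show (Finset.univ.filter fun s : Fin k => (s : ℕ) < k) = Finset.univ from by
      ext s; simp [s.isLt]]
    refine Finset.sum_congr rfl fun j _ => ?_
    rw [Finset.mul_sum]
    exact Finset.sum_congr rfl fun i hi => by rw [hcval j i hi]
  -- block equalities imply level equalities
  have hb2l : ∀ x : Fin n → ℝ,
      (∀ j : Fin k, ∑ i ∈ π j, x i = z (Ucum π (j.val + 1)) - z (Ucum π j.val)) →
      ∀ m, m ≤ k → ∑ i ∈ Ucum π m, x i = z (Ucum π m) := by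
    intro x hx m
    induction m with
    | zero => intro _; rw [hU0, hz0]; simp
    | succ m ih =>
      intro hm
      have hmk : m < k := hm
      have h1 : ∑ i ∈ Ucum π (m + 1), x i
          = ∑ i ∈ Ucum π m, x i + ∑ i ∈ π ⟨m, hmk⟩, x i := hsum_succ x ⟨m, hmk⟩
      have h2 : ∑ i ∈ π (⟨m, hmk⟩ : Fin k), x i = z (Ucum π (m + 1)) - z (Ucum π m) :=
        hx ⟨m, hmk⟩
      rw [h1, ih (Nat.le_of_succ_le hm), h2]
      ring
  -- Abel summation difference formula
  have hdiff : ∀ x y : Fin n → ℝ, (∑ i, x i) = (∑ i, y i) →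
      (∑ i, a i * x i) - (∑ i, a i * y i)
        = ∑ m ∈ Finset.range (k - 1), (cfun m - cfun (m + 1)) *
            ((∑ i ∈ Ucum π (m + 1), x i) - ∑ i ∈ Ucum π (m + 1), y i) := by
    intro x y hxy
    have hF0 : (∑ i ∈ Ucum π 0, x i) - (∑ i ∈ Ucum π 0, y i) = 0 := by
      rw [hU0]; simp
    have hFk : (∑ i ∈ Ucum π k, x i) - (∑ i ∈ Ucum π k, y i) = 0 := by
      rw [hUtop]
      exact sub_eq_zero_of_eq hxy
    have key2 := abel_identity k cfun
      (fun m => (∑ i ∈ Ucum π m, x i) - ∑ i ∈ Ucum π m, y i) hF0 hFk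
    rw [hlin x, hlin y, ← Finset.sum_sub_distrib, ← key2,
      ← Fin.sum_univ_eq_sum_range (fun m => cfun m *
        (((∑ i ∈ Ucum π (m + 1), x i) - ∑ i ∈ Ucum π (m + 1), y i) -
          ((∑ i ∈ Ucum π m, x i) - ∑ i ∈ Ucum π m, y i))) k]
    refine Finset.sum_congr rfl fun j _ => ?_
    have h1 := hsum_succ x j
    have h2 := hsum_succ y j
    linear_combination (cfun j.val) * h2 - (cfun j.val) * h1
  -- the greedy point
  obtain ⟨g, hg1, hg2⟩ := greedy_exists z hz0 hsuper ρ hρinj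
  have hgU : ∀ m : ℕ, ∑ i ∈ Ucum π m, g i = z (Ucum π m) := fun m => hg2 _ (hUdc m)
  have hgP : g ∈ Pz n z := by
    constructor
    · have := hgU k
      rwa [hUtop] at this
    · exact hg1
  have hgblock : ∀ j : Fin k, ∑ i ∈ π j, g i = z (Ucum π (j.val + 1)) - z (Ucum π j.val) := by
    intro j
    have h := hsum_succ g j
    rw [hgU, hgU] at h
    linarith
  -- maximality from block equalities
  have claimB_to_max : ∀ x ∈ Pz n z,
      (∀ j : Fin k, ∑ i ∈ π j, x i = z (Ucum π (j.val + 1)) - z (Ucum π j.val)) →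
      ∀ y ∈ Pz n z, ∑ i, a i * y i ≤ ∑ i, a i * x i := by
    intro x hx hxb y hy
    have hΔ := hdiff x y (by rw [hx.1, hy.1])
    have hterm : ∀ m ∈ Finset.range (k - 1),
        0 ≤ (cfun m - cfun (m + 1)) *
          ((∑ i ∈ Ucum π (m + 1), x i) - ∑ i ∈ Ucum π (m + 1), y i) := by
      intro m hm
      have hm1k : m + 1 < k := by have := Finset.mem_range.mp hm; omega
      have hc := hcmono m (m + 1) (Nat.lt_succ_self m) hm1k
      have hxx : ∑ i ∈ Ucum π (m + 1), x i = z (Ucum π (m + 1)) :=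
        hb2l x hxb (m + 1) hm1k.le
      have hyy : z (Ucum π (m + 1)) ≤ ∑ i ∈ Ucum π (m + 1), y i := hy.2 _
      nlinarith
    have := Finset.sum_nonneg hterm
    linarith
  -- maximality implies block equalities
  have claimMax_to_B : ∀ x ∈ Pz n z,
      (∀ y ∈ Pz n z, ∑ i, a i * y i ≤ ∑ i, a i * x i) →
      ∀ j : Fin k, ∑ i ∈ π j, x i = z (Ucum π (j.val + 1)) - z (Ucum π j.val) := by
    intro x hx hmax
    have hΔ := hdiff g x (by rw [hgP.1, hx.1])
    have hle : (∑ i, a i * g i) - (∑ i, a i * x i) ≤ 0 := by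
      have := hmax g hgP
      linarith
    have hterm : ∀ m ∈ Finset.range (k - 1),
        0 ≤ (cfun m - cfun (m + 1)) *
          ((∑ i ∈ Ucum π (m + 1), g i) - ∑ i ∈ Ucum π (m + 1), x i) := by
      intro m hm
      have hm1k : m + 1 < k := by have := Finset.mem_range.mp hm; omega
      have hc := hcmono m (m + 1) (Nat.lt_succ_self m) hm1k
      have hgg := hgU (m + 1)
      have hxx : z (Ucum π (m + 1)) ≤ ∑ i ∈ Ucum π (m + 1), x i := hx.2 _
      nlinarith
    have hsum0 : ∑ m ∈ Finset.range (k - 1), (cfun m - cfun (m + 1)) *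
        ((∑ i ∈ Ucum π (m + 1), g i) - ∑ i ∈ Ucum π (m + 1), x i) = 0 :=
      le_antisymm (by linarith) (Finset.sum_nonneg hterm)
    have hzero := (Finset.sum_eq_zero_iff_of_nonneg hterm).mp hsum0
    have hΔ0 : ∀ m : ℕ, m ≤ k → ∑ i ∈ Ucum π m, x i = z (Ucum π m) := by
      intro m hm
      match m with
      | 0 => rw [hU0, hz0]; simp
      | (m' + 1) =>
        rcases eq_or_lt_of_le hm with he | hlt
        · rw [he, hUtop]
          exact hx.1
        · have hm' : m' ∈ Finset.range (k - 1) := Finset.mem_range.mpr (by omega)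
          have h0 := hzero m' hm'
          have hcne : cfun m' - cfun (m' + 1) ≠ 0 := by
            have := hcmono m' (m' + 1) (Nat.lt_succ_self m') (by omega)
            linarith
          have h1 : (∑ i ∈ Ucum π (m' + 1), g i) - ∑ i ∈ Ucum π (m' + 1), x i = 0 := by
            rcases mul_eq_zero.mp h0 with h | h
            · exact absurd h hcne
            · exact h
          have := hgU (m' + 1)
          linarith
    intro j
    have h1 := hΔ0 (j.val + 1) j.isLt
    have h2 := hΔ0 j.val (le_of_lt (lt_of_lt_of_le j.isLt (le_refl k)))
    have h3 := hsum_succ x j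
    linarith
  -- B implies the subset inequalities of C
  have hB_to_C : ∀ x ∈ Pz n z,
      (∀ j : Fin k, ∑ i ∈ π j, x i = z (Ucum π (j.val + 1)) - z (Ucum π j.val)) →
      ∀ j : Fin k, ∀ I ⊆ π j,
        z (Ucum π j.val ∪ I) - z (Ucum π j.val) ≤ ∑ i ∈ I, x i := by
    intro x hx hxb j I hI
    have h1 : ∑ i ∈ Ucum π j.val, x i = z (Ucum π j.val) :=
      hb2l x hxb j.val j.isLt.le
    have hdj : Disjoint (Ucum π j.val) I := by
      rw [Finset.disjoint_left]
      intro i hiU hiI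
      have hk1 := (hmemU j.val i).mp hiU
      have hk2 := hkeyuniq j i (hI hiI)
      omega
    have h2 := hx.2 (Ucum π j.val ∪ I)
    rw [Finset.sum_union hdj] at h2
    linarith
  -- the C conditions imply membership in P
  have hC_to_P : ∀ x : Fin n → ℝ,
      (∀ j : Fin k, (∑ i ∈ π j, x i = z (Ucum π (j.val + 1)) - z (Ucum π j.val)) ∧
        ∀ I ⊆ π j, z (Ucum π j.val ∪ I) - z (Ucum π j.val) ≤ ∑ i ∈ I, x i) →
      x ∈ Pz n z := by
    intro x hC
    have hkeyI : ∀ m : ℕ, m ≤ k → ∀ I ⊆ Ucum π m, z I ≤ ∑ i ∈ I, x i := by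
      intro m
      induction m with
      | zero =>
        intro _ I hI
        rw [hU0] at hI
        rw [Finset.subset_empty.mp hI]
        simp [hz0]
      | succ m ih =>
        intro hm I hI
        have hmk : m < k := hm
        have hIsub : ∀ i ∈ I, (key i).val < m + 1 := fun i hi => (hmemU _ i).mp (hI hi)
        have hsplit : I = (I ∩ Ucum π m) ∪ (I ∩ π (⟨m, hmk⟩ : Fin k)) := by
          ext i
          simp only [Finset.mem_union, Finset.mem_inter]
          constructor
          · intro hi
            rcases Nat.lt_or_ge (key i).val m with h | h
            · exact Or.inl ⟨hi, (hmemU m i).mpr h⟩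
            · have hv : (key i).val = m := by have := hIsub i hi; omega
              have hkj : key i = (⟨m, hmk⟩ : Fin k) := Fin.val_injective hv
              exact Or.inr ⟨hi, hkj ▸ hkeymem i⟩
          · rintro (⟨h, _⟩ | ⟨h, _⟩) <;> exact h
        have hdisjmj : Disjoint (Ucum π m) (π (⟨m, hmk⟩ : Fin k)) := by
          rw [Finset.disjoint_left]
          intro i hiU hiπ
          have hk1 := (hmemU m i).mp hiU
          have hk2 := hkeyuniq ⟨m, hmk⟩ i hiπ
          have : (key i).val = m := by rw [← hk2]
          omega
        have hdisjI : Disjoint (I ∩ Ucum π m) (I ∩ π (⟨m, hmk⟩ : Fin k)) :=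
          hdisjmj.mono Finset.inter_subset_right Finset.inter_subset_right
        have hsum : ∑ i ∈ I, x i
            = ∑ i ∈ I ∩ Ucum π m, x i + ∑ i ∈ I ∩ π (⟨m, hmk⟩ : Fin k), x i := by
          nth_rewrite 1 [hsplit]
          exact Finset.sum_union hdisjI
        have hsup := hsuper I (Ucum π m)
        have hU1 : I ∪ Ucum π m = Ucum π m ∪ (I ∩ π (⟨m, hmk⟩ : Fin k)) := by
          ext i
          simp only [Finset.mem_union, Finset.mem_inter]
          constructor
          · rintro (hi | hi)
            · rcases Nat.lt_or_ge (key i).val m with h | h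
              · exact Or.inl ((hmemU m i).mpr h)
              · have hv : (key i).val = m := by have := hIsub i hi; omega
                have hkj : key i = (⟨m, hmk⟩ : Fin k) := Fin.val_injective hv
                exact Or.inr ⟨hi, hkj ▸ hkeymem i⟩
            · exact Or.inl hi
          · rintro (hi | ⟨hi, _⟩)
            · exact Or.inr hi
            · exact Or.inl hi
        rw [hU1] at hsup
        have hih := ih (Nat.le_of_succ_le hm) (I ∩ Ucum π m) Finset.inter_subset_right
        have hblk : z (Ucum π m ∪ (I ∩ π (⟨m, hmk⟩ : Fin k))) - z (Ucum π m)
            ≤ ∑ i ∈ I ∩ π (⟨m, hmk⟩ : Fin k), x i :=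
          (hC ⟨m, hmk⟩).2 _ Finset.inter_subset_right
        linarith
    constructor
    · have h := hb2l x (fun j => (hC j).1) k le_rfl
      rwa [hUtop] at h
    · intro I
      exact hkeyI k le_rfl I (by rw [hUtop]; exact Finset.subset_univ I)
  constructor
  · ext x
    simp only [Set.mem_setOf_eq]
    constructor
    · rintro ⟨hx, hmax⟩
      refine ⟨hx, fun j => ?_⟩
      rw [unionUpTo_eq_Ucum, unionBelow_eq_Ucum]
      exact claimMax_to_B x hx hmax j
    · rintro ⟨hx, hb⟩
      refine ⟨hx, claimB_to_max x hx fun j => ?_⟩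
      have h := hb j
      rwa [unionUpTo_eq_Ucum, unionBelow_eq_Ucum] at h
  · ext x
    simp only [Set.mem_setOf_eq]
    constructor
    · rintro ⟨hx, hmax⟩
      have hb := claimMax_to_B x hx hmax
      intro j
      constructor
      · rw [unionUpTo_eq_Ucum, unionBelow_eq_Ucum]
        exact hb j
      · intro I hI
        rw [unionBelow_eq_Ucum]
        exact hB_to_C x hx hb j I hI
    · intro hC
      have hC' : ∀ j : Fin k,
          (∑ i ∈ π j, x i = z (Ucum π (j.val + 1)) - z (Ucum π j.val)) ∧
          ∀ I ⊆ π j, z (Ucum π j.val ∪ I) - z (Ucum π j.val) ≤ ∑ i ∈ I, x i := by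
        intro j
        have h := hC j
        rwa [unionUpTo_eq_Ucum, unionBelow_eq_Ucum] at h
      have hxP : x ∈ Pz n z := hC_to_P x hC'
      exact ⟨hxP, claimB_to_max x hxP fun j => (hC' j).1⟩
end

section
/- Let {z_I}_{I⊆[n]} be supermodular real parameters with z_∅ = 0 and z_I < z_J whenever I ⊊ J ⊆ [n], let P = P_n({z_I}), let π = π_1|⋯|π_k be an ordered partition of [n], and let 0 ≤ q ≤ 1. Then the π-lifting P^π(q) equals the set of x ∈ ℝ^n satisfying the simplicial inequalities q ≤ x_{π_1}/z_π^{π_1} ≤ x_{π_2}/z_π^{π_2} ≤ ⋯ ≤ x_{π_k}/z_π^{π_k} ≤ 1 together with the facial inequalities x_C/z_{π,i}^{C} ≥ x_D/z_{π,i}^{D} for every 1 ≤ i ≤ k and every partition of π_i into disjoint nonempty sets C and D, where for S ⊆ [n] we write x_S = Σ_{i∈S} x_i, z_π^{π_i} = z_{π_1∪⋯∪π_i} − z_{π_1∪⋯∪π_{i−1}}, z_{π,i}^{C} = z_{π_1∪⋯∪π_{i−1}∪C} − z_{π_1∪⋯∪π_{i−1}}, and z_{π,i}^{D} = z_{π_1∪⋯∪π_i}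 − z_{π_1∪⋯∪π_{i−1}∪C}. -/
/-- A canonical linear functional of type `π`: the coefficient of `x_i` is the
index of the block of `π` containing `i`. -/
def typeFun {n k : ℕ} (π : Fin k → Finset (Fin n)) (x : Fin n → ℝ) : ℝ :=
  ∑ s : Fin k, ∑ i ∈ π s, (s : ℝ) * x i

/-- The face `P_π` of `P_n({z_I})`: the set of maximizers over `P_n({z_I})` of a
linear functional of type `π` (this set depends only on `π`). -/
def Pface {n : ℕ} (k : ℕ) (z : Finset (Fin n) → ℝ) (π : Fin k → Finset (Fin n)) :
    Set (Fin n → ℝ) :=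
  {x ∈ Pz n z | ∀ y ∈ Pz n z, typeFun π y ≤ typeFun π x}

/-- The map defining `P_π^i`: multiply by `q` each coordinate indexed by
`π_1 ∪ ⋯ ∪ π_i`, and fix the remaining coordinates. -/
def scaleMap {n k : ℕ} (π : Fin k → Finset (Fin n)) (q : ℝ) (i : Fin (k + 1))
    (x : Fin n → ℝ) : Fin n → ℝ := fun j =>
  if j ∈ (Finset.univ.filter fun s : Fin k => (s : ℕ) < (i : ℕ)).biUnion π then q * x j
  else x j

/-- The `(π,q)`-lifting `P^π(q)`: the convex hull of `P_π^0 ∪ P_π^1 ∪ ⋯ ∪ P_π^k`. -/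
noncomputable def piLift {n : ℕ} (k : ℕ) (z : Finset (Fin n) → ℝ)
    (π : Fin k → Finset (Fin n)) (q : ℝ) : Set (Fin n → ℝ) :=
  convexHull ℝ (⋃ i : Fin (k + 1), scaleMap π q i '' Pface k z π)

def UB {n k : ℕ} (π : Fin k → Finset (Fin n)) (m : ℕ) : Finset (Fin n) :=
  (Finset.univ.filter fun s : Fin k => (s : ℕ) < m).biUnion π

namespace PiAux

variable {n k : ℕ} {π : Fin k → Finset (Fin n)}

lemma mem_UB {m : ℕ} {t : Fin n} :
    t ∈ UB π m ↔ ∃ s : Fin k, (s : ℕ) < m ∧ t ∈ π s := by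
  simp [UB, Finset.mem_biUnion, Finset.mem_filter]

lemma UB_zero : UB π 0 = ∅ := by
  ext t; simp [mem_UB]

lemma UB_succ {m : ℕ} (h : m < k) :
    UB π (m + 1) = UB π m ∪ π ⟨m, h⟩ := by
  ext t
  simp only [mem_UB, Finset.mem_union]
  constructor
  · rintro ⟨s, hs, hts⟩
    rcases Nat.lt_succ_iff_lt_or_eq.1 hs with h' | h'
    · exact Or.inl ⟨s, h', hts⟩
    · right
      have : s = ⟨m, h⟩ := Fin.ext h'
      rwa [this] at hts
  · rintro (⟨s, hs, hts⟩ | ht)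
    · exact ⟨s, Nat.lt_succ_of_lt hs, hts⟩
    · exact ⟨⟨m, h⟩, Nat.lt_succ_self m, ht⟩

lemma UB_mono {m m' : ℕ} (h : m ≤ m') : UB π m ⊆ UB π m' := by
  intro t ht
  rcases mem_UB.1 ht with ⟨s, hs, hts⟩
  exact mem_UB.2 ⟨s, lt_of_lt_of_le hs h, hts⟩

lemma block_eq (hdisj : ∀ s t, s ≠ t → Disjoint (π s) (π t))
    {t : Fin n} {j j' : Fin k} (h : t ∈ π j) (h' : t ∈ π j') : j = j' := by
  by_contra hne
  exact (Finset.disjoint_left.1 (hdisj j j' hne)) h h'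

lemma notMem_UB_of_mem_block (hdisj : ∀ s t, s ≠ t → Disjoint (π s) (π t))
    {t : Fin n} {j : Fin k} (h : t ∈ π j) {m : ℕ} (hm : m ≤ (j : ℕ)) :
    t ∉ UB π m := by
  intro ht
  rcases mem_UB.1 ht with ⟨s, hs, hts⟩
  have := block_eq hdisj h hts
  subst this
  omega

lemma disjoint_UB_block (hdisj : ∀ s t, s ≠ t → Disjoint (π s) (π t))
    {m : ℕ} (h : m < k) : Disjoint (UB π m) (π ⟨m, h⟩) := by
  rw [Finset.disjoint_right]
  intro t ht
  exact notMem_UB_of_mem_block hdisj ht le_rfl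

lemma UB_univ (hcover : ∀ i : Fin n, ∃ s, i ∈ π s) {m : ℕ} (hm : k ≤ m) :
    UB π m = Finset.univ := by
  ext t
  simp only [Finset.mem_univ, iff_true]
  rcases hcover t with ⟨s, hs⟩
  exact mem_UB.2 ⟨s, lt_of_lt_of_le s.isLt hm, hs⟩

lemma sum_UB_succ (hdisj : ∀ s t, s ≠ t → Disjoint (π s) (π t))
    {m : ℕ} (h : m < k) (x : Fin n → ℝ) :
    ∑ t ∈ UB π (m + 1), x t = ∑ t ∈ UB π m, x t + ∑ t ∈ π ⟨m, h⟩, x t := by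
  rw [UB_succ h, Finset.sum_union (disjoint_UB_block hdisj h)]

lemma unionBelow_eq (j : Fin k) : unionBelow π j = UB π (j : ℕ) := by
  unfold unionBelow UB
  rfl

lemma unionUpTo_eq (j : Fin k) : unionUpTo π j = UB π ((j : ℕ) + 1) := by
  unfold unionUpTo UB
  congr 1
  ext s
  simp only [Finset.mem_filter, Finset.mem_univ, true_and, Fin.le_def, Nat.lt_succ_iff]

end PiAux
section Greedy

variable {n : ℕ} (z : Finset (Fin n) → ℝ)

/-- Greedy coordinate: relative increments of `z` over `B` along the order of `S`. -/
def greedyPt (B S : Finset (Fin n)) (t : Fin n) : ℝ :=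
  z (B ∪ S.filter (· ≤ t)) - z (B ∪ S.filter (· < t))

lemma filter_le_erase_max {S : Finset (Fin n)} {m t : Fin n}
    (hm : ∀ s ∈ S, s ≤ m) (ht : t < m) :
    (S.erase m).filter (· ≤ t) = S.filter (· ≤ t) := by
  ext s
  simp only [Finset.mem_filter, Finset.mem_erase]
  constructor
  · rintro ⟨⟨-, hs⟩, h⟩; exact ⟨hs, h⟩
  · rintro ⟨hs, h⟩
    exact ⟨⟨fun hsm => absurd (hsm ▸ h) (not_le.2 ht), hs⟩, h⟩

lemma filter_lt_erase_max {S : Finset (Fin n)} {m t : Fin n}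
    (hm : ∀ s ∈ S, s ≤ m) (ht : t < m) :
    (S.erase m).filter (· < t) = S.filter (· < t) := by
  ext s
  simp only [Finset.mem_filter, Finset.mem_erase]
  constructor
  · rintro ⟨⟨-, hs⟩, h⟩; exact ⟨hs, h⟩
  · rintro ⟨hs, h⟩
    exact ⟨⟨fun hsm => absurd (hsm ▸ h) (not_lt.2 ht.le), hs⟩, h⟩

lemma greedyPt_sum_eq (hz0 : z ∅ = 0) (B : Finset (Fin n)) (S : Finset (Fin n)) :
    ∑ t ∈ S, greedyPt z B S t = z (B ∪ S) - z B := by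
  induction S using Finset.strongInduction with
  | _ S ih =>
    rcases S.eq_empty_or_nonempty with rfl | hS
    · simp
    · set m := S.max' hS with hmdef
      have hmS : m ∈ S := S.max'_mem hS
      have hmax : ∀ s ∈ S, s ≤ m := fun s hs => S.le_max' s hs
      have h1 : S.filter (· ≤ m) = S := by
        apply Finset.filter_true_of_mem
        intro s hs; exact hmax s hs
      have h2 : S.filter (· < m) = S.erase m := by
        ext s
        simp only [Finset.mem_filter, Finset.mem_erase]
        constructor
        · rintro ⟨hs, h⟩; exact ⟨ne_of_lt h, hs⟩
        · rintro ⟨hne, hs⟩; exact ⟨hs, lt_of_le_of_ne (hmax s hs) hne⟩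
      rw [← Finset.add_sum_erase _ _ hmS]
      have hcong : ∑ t ∈ S.erase m, greedyPt z B S t
          = ∑ t ∈ S.erase m, greedyPt z B (S.erase m) t := by
        apply Finset.sum_congr rfl
        intro t ht
        have htm : t < m := lt_of_le_of_ne (hmax t (Finset.mem_of_mem_erase ht))
          (Finset.ne_of_mem_erase ht)
        unfold greedyPt
        rw [filter_le_erase_max hmax htm, filter_lt_erase_max hmax htm]
      rw [hcong, ih (S.erase m) (Finset.erase_ssubset hmS)]
      unfold greedyPt
      rw [h1, h2]
      ring

lemma greedyPt_sum_ge
    (hsuper : ∀ I J : Finset (Fin n), z I + z J ≤ z (I ∪ J) + z (I ∩ J))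
    (B S : Finset (Fin n)) (C : Finset (Fin n)) (hCS : C ⊆ S) :
    z (B ∪ C) - z B ≤ ∑ t ∈ C, greedyPt z B S t := by
  induction C using Finset.strongInduction with
  | _ C ih =>
    rcases C.eq_empty_or_nonempty with rfl | hC
    · simp
    · set m := C.max' hC with hmdef
      have hmC : m ∈ C := C.max'_mem hC
      have hmax : ∀ s ∈ C, s ≤ m := fun s hs => C.le_max' s hs
      have hU : (B ∪ C) ∪ (B ∪ S.filter (· < m)) = B ∪ S.filter (· ≤ m) := by
        rw [← Finset.union_union_distrib_left]
        congr 1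
        ext s
        simp only [Finset.mem_union, Finset.mem_filter]
        constructor
        · rintro (hs | ⟨hs, h⟩)
          · exact ⟨hCS hs, hmax s hs⟩
          · exact ⟨hs, h.le⟩
        · rintro ⟨hs, h⟩
          rcases eq_or_lt_of_le h with rfl | h'
          · exact Or.inl hmC
          · exact Or.inr ⟨hs, h'⟩
      have hI : (B ∪ C) ∩ (B ∪ S.filter (· < m)) = B ∪ C.erase m := by
        rw [← Finset.union_inter_distrib_left]
        congr 1
        ext s
        simp only [Finset.mem_inter, Finset.mem_filter, Finset.mem_erase]
        constructor
        · rintro ⟨hs, -, h⟩; exact ⟨ne_of_lt h, hs⟩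
        · rintro ⟨hne, hs⟩; exact ⟨hs, hCS hs, lt_of_le_of_ne (hmax s hs) hne⟩
      have hsup := hsuper (B ∪ C) (B ∪ S.filter (· < m))
      rw [hU, hI] at hsup
      have hrec := ih (C.erase m) (Finset.erase_ssubset hmC)
        ((Finset.erase_subset _ _).trans hCS)
      rw [← Finset.add_sum_erase _ _ hmC]
      unfold greedyPt at hrec ⊢
      linarith

end Greedy
section Face

variable {n k : ℕ} {z : Finset (Fin n) → ℝ} {π : Fin k → Finset (Fin n)}

/-- The tight/product description of the face `P_π`. -/
def Qset (n k : ℕ) (z : Finset (Fin n) → ℝ) (π : Fin k → Finset (Fin n)) :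
    Set (Fin n → ℝ) :=
  {x | (∀ m : ℕ, m ≤ k → ∑ t ∈ UB π m, x t = z (UB π m)) ∧
       ∀ j : Fin k, ∀ C ⊆ π j, z (UB π (j : ℕ) ∪ C) ≤ z (UB π (j : ℕ)) + ∑ t ∈ C, x t}

lemma chain_bound (hz0 : z ∅ = 0)
    (hsuper : ∀ I J : Finset (Fin n), z I + z J ≤ z (I ∪ J) + z (I ∩ J))
    (hdisj : ∀ s t, s ≠ t → Disjoint (π s) (π t)) {x : Fin n → ℝ} (hx : x ∈ Qset n k z π) (I : Finset (Fin n)) :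
    ∀ m : ℕ, m ≤ k → z (I ∩ UB π m) ≤ ∑ t ∈ I ∩ UB π m, x t := by
  intro m
  induction m with
  | zero => intro _; simp [PiAux.UB_zero, hz0]
  | succ m ih =>
    intro hm
    have hmk : m < k := hm
    have hih := ih (le_of_lt hmk)
    set B := UB π m with hB
    set Bl := π ⟨m, hmk⟩ with hBl
    have hUB' : UB π (m + 1) = B ∪ Bl := PiAux.UB_succ hmk
    have hdisjB : Disjoint B Bl := PiAux.disjoint_UB_block hdisj hmk
    have hsplit : I ∩ UB π (m + 1) = (I ∩ B) ∪ (I ∩ Bl) := by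
      rw [hUB', Finset.inter_union_distrib_left]
    have hsum : ∑ t ∈ I ∩ UB π (m + 1), x t
        = ∑ t ∈ I ∩ B, x t + ∑ t ∈ I ∩ Bl, x t := by
      rw [hsplit, Finset.sum_union (hdisjB.mono Finset.inter_subset_right
        Finset.inter_subset_right)]
    have hUeq : (I ∩ UB π (m + 1)) ∪ B = B ∪ (I ∩ Bl) := by
      rw [hUB']
      ext t
      simp only [Finset.mem_union, Finset.mem_inter]
      tauto
    have hIeq : (I ∩ UB π (m + 1)) ∩ B = I ∩ B := by
      rw [hUB']
      ext t
      simp only [Finset.mem_union, Finset.mem_inter]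
      tauto
    have hsup := hsuper (I ∩ UB π (m + 1)) B
    rw [hUeq, hIeq] at hsup
    have hblock := hx.2 ⟨m, hmk⟩ (I ∩ Bl) Finset.inter_subset_right
    linarith

lemma Qset_mem_Pz (hz0 : z ∅ = 0)
    (hsuper : ∀ I J : Finset (Fin n), z I + z J ≤ z (I ∪ J) + z (I ∩ J))
    (hdisj : ∀ s t, s ≠ t → Disjoint (π s) (π t))
    (hcover : ∀ i : Fin n, ∃ s, i ∈ π s) {x : Fin n → ℝ} (hx : x ∈ Qset n k z π) : x ∈ Pz n z := by
  have hUk : UB π k = Finset.univ := PiAux.UB_univ hcover le_rfl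
  constructor
  · have := hx.1 k le_rfl
    rw [hUk] at this
    simpa using this
  · intro I
    have := chain_bound hz0 hsuper hdisj hx I k le_rfl
    rw [hUk, Finset.inter_univ] at this
    exact this

lemma sum_UB_eq (hdisj : ∀ s t, s ≠ t → Disjoint (π s) (π t)) (x : Fin n → ℝ) (m : ℕ) :
    ∑ t ∈ UB π m, x t
      = ∑ s : Fin k, if (s : ℕ) < m then ∑ t ∈ π s, x t else 0 := by
  rw [UB, Finset.sum_biUnion, Finset.sum_filter]
  intro a _ b _ hab
  exact hdisj a b hab

lemma sum_univ_eq (hdisj : ∀ s t, s ≠ t → Disjoint (π s) (π t))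
    (hcover : ∀ i : Fin n, ∃ s, i ∈ π s) (x : Fin n → ℝ) :
    ∑ t, x t = ∑ s : Fin k, ∑ t ∈ π s, x t := by
  have hUk : UB π k = Finset.univ := PiAux.UB_univ hcover le_rfl
  rw [← hUk, sum_UB_eq hdisj]
  apply Finset.sum_congr rfl
  intro s _
  rw [if_pos s.isLt]

lemma typeFun_eq (hdisj : ∀ s t, s ≠ t → Disjoint (π s) (π t))
    (hcover : ∀ i : Fin n, ∃ s, i ∈ π s) (x : Fin n → ℝ) :
    typeFun π x
      = ∑ m ∈ Finset.range k, ((∑ t, x t) - ∑ t ∈ UB π (m + 1), x t) := by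
  have h1 : typeFun π x = ∑ s : Fin k, ((s : ℕ) : ℝ) * ∑ t ∈ π s, x t := by
    unfold typeFun
    apply Finset.sum_congr rfl
    intro s _
    rw [Finset.mul_sum]
  have h2 : ∀ m ∈ Finset.range k,
      (∑ t, x t) - ∑ t ∈ UB π (m + 1), x t
        = ∑ s : Fin k, if m < (s : ℕ) then ∑ t ∈ π s, x t else 0 := by
    intro m _
    rw [sum_univ_eq hdisj hcover, sum_UB_eq hdisj, ← Finset.sum_sub_distrib]
    apply Finset.sum_congr rfl
    intro s _
    by_cases h : (s : ℕ) < m + 1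
    · rw [if_pos h, if_neg (by omega), sub_self]
    · rw [if_neg h, if_pos (by omega), sub_zero]
  rw [Finset.sum_congr rfl h2, Finset.sum_comm, h1]
  apply Finset.sum_congr rfl
  intro s _
  have : ∑ m ∈ Finset.range k, (if m < (s : ℕ) then ∑ t ∈ π s, x t else 0)
      = ∑ m ∈ (Finset.range k).filter (· < (s : ℕ)), ∑ t ∈ π s, x t := by
    rw [Finset.sum_filter]
  rw [this]
  have hfe : (Finset.range k).filter (· < (s : ℕ)) = Finset.range (s : ℕ) := by
    ext m
    simp only [Finset.mem_filter, Finset.mem_range]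
    have := s.isLt
    omega
  rw [hfe, Finset.sum_const, Finset.card_range, nsmul_eq_mul]


lemma gpt_mem_Qset (hz0 : z ∅ = 0)
    (hsuper : ∀ I J : Finset (Fin n), z I + z J ≤ z (I ∪ J) + z (I ∩ J))
    (hdisj : ∀ s t, s ≠ t → Disjoint (π s) (π t))
    (bi : Fin n → Fin k) (hbi : ∀ t, t ∈ π (bi t)) :
    (fun t => greedyPt z (UB π ((bi t : ℕ))) (π (bi t)) t) ∈ Qset n k z π := by
  set g : Fin n → ℝ := fun t => greedyPt z (UB π ((bi t : ℕ))) (π (bi t)) t with hg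
  have hsum_congr : ∀ (j : Fin k) (C : Finset (Fin n)), C ⊆ π j →
      ∑ t ∈ C, g t = ∑ t ∈ C, greedyPt z (UB π (j : ℕ)) (π j) t := by
    intro j C hC
    apply Finset.sum_congr rfl
    intro t ht
    have hbt : bi t = j := PiAux.block_eq hdisj (hbi t) (hC ht)
    simp [hg, hbt]
  constructor
  · intro m
    induction m with
    | zero => intro _; simp [PiAux.UB_zero, hz0]
    | succ m ih =>
      intro hm
      have hmk : m < k := hm
      rw [PiAux.sum_UB_succ hdisj hmk, ih (le_of_lt hmk),
        hsum_congr ⟨m, hmk⟩ _ (subset_refl _), greedyPt_sum_eq z hz0,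
        PiAux.UB_succ hmk]
      ring
  · intro j C hC
    rw [hsum_congr j C hC]
    have := greedyPt_sum_ge z hsuper (UB π (j : ℕ)) (π j) C hC
    linarith

lemma tight_mem_Qset (hz0 : z ∅ = 0)
    (hdisj : ∀ s t, s ≠ t → Disjoint (π s) (π t))
    {x : Fin n → ℝ} (hx : x ∈ Pz n z)
    (ht : ∀ m : ℕ, m ≤ k → ∑ t ∈ UB π m, x t = z (UB π m)) :
    x ∈ Qset n k z π := by
  refine ⟨ht, ?_⟩
  intro j C hC
  have hdisjC : Disjoint (UB π (j : ℕ)) C := by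
    refine Finset.disjoint_left.2 fun t htU htC => ?_
    exact PiAux.notMem_UB_of_mem_block hdisj (hC htC) le_rfl htU
  have h1 := hx.2 (UB π (j : ℕ) ∪ C)
  rw [Finset.sum_union hdisjC] at h1
  have h2 := ht (j : ℕ) j.isLt.le
  linarith

lemma typeFun_le_M (hdisj : ∀ s t, s ≠ t → Disjoint (π s) (π t))
    (hcover : ∀ i : Fin n, ∃ s, i ∈ π s)
    {x : Fin n → ℝ} (hx : x ∈ Pz n z) :
    typeFun π x ≤ ∑ m ∈ Finset.range k, (z Finset.univ - z (UB π (m + 1))) := by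
  rw [typeFun_eq hdisj hcover]
  apply Finset.sum_le_sum
  intro m _
  have h1 : ∑ t, x t = z Finset.univ := hx.1
  have h2 := hx.2 (UB π (m + 1))
  linarith

lemma tight_typeFun_eq_M (hdisj : ∀ s t, s ≠ t → Disjoint (π s) (π t))
    (hcover : ∀ i : Fin n, ∃ s, i ∈ π s)
    {x : Fin n → ℝ} (hx : x ∈ Pz n z)
    (ht : ∀ m : ℕ, m ≤ k → ∑ t ∈ UB π m, x t = z (UB π m)) :
    typeFun π x = ∑ m ∈ Finset.range k, (z Finset.univ - z (UB π (m + 1))) := by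
  rw [typeFun_eq hdisj hcover]
  apply Finset.sum_congr rfl
  intro m hm
  rw [hx.1, ht (m + 1) (Finset.mem_range.1 hm)]

lemma typeFun_eq_M_tight (hz0 : z ∅ = 0)
    (hdisj : ∀ s t, s ≠ t → Disjoint (π s) (π t))
    (hcover : ∀ i : Fin n, ∃ s, i ∈ π s)
    {x : Fin n → ℝ} (hx : x ∈ Pz n z)
    (hM : typeFun π x = ∑ m ∈ Finset.range k, (z Finset.univ - z (UB π (m + 1)))) :
    ∀ m : ℕ, m ≤ k → ∑ t ∈ UB π m, x t = z (UB π m) := by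
  rw [typeFun_eq hdisj hcover] at hM
  have hle : ∀ m ∈ Finset.range k,
      (∑ t, x t) - ∑ t ∈ UB π (m + 1), x t ≤ z Finset.univ - z (UB π (m + 1)) := by
    intro m _
    have h1 : ∑ t, x t = z Finset.univ := hx.1
    have h2 := hx.2 (UB π (m + 1))
    linarith
  have heach := (Finset.sum_eq_sum_iff_of_le hle).1 hM
  intro m hm
  rcases Nat.eq_zero_or_eq_succ_pred m with rfl | hm'
  · simp [PiAux.UB_zero, hz0]
  · have hlt : m - 1 < k := by omega
    have := heach (m - 1) (Finset.mem_range.2 hlt)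
    have h1 : ∑ t, x t = z Finset.univ := hx.1
    have hmeq : m - 1 + 1 = m := by omega
    rw [hmeq] at this
    linarith

lemma Pface_eq_Qset (hz0 : z ∅ = 0)
    (hsuper : ∀ I J : Finset (Fin n), z I + z J ≤ z (I ∪ J) + z (I ∩ J))
    (hdisj : ∀ s t, s ≠ t → Disjoint (π s) (π t))
    (hcover : ∀ i : Fin n, ∃ s, i ∈ π s) :
    Pface k z π = Qset n k z π := by
  classical
  choose bi hbi using hcover
  have hcover' : ∀ i : Fin n, ∃ s, i ∈ π s := fun i => ⟨bi i, hbi i⟩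
  set gp : Fin n → ℝ := fun t => greedyPt z (UB π ((bi t : ℕ))) (π (bi t)) t with hgp
  have hgpQ : gp ∈ Qset n k z π := gpt_mem_Qset hz0 hsuper hdisj bi hbi
  have hgpPz : gp ∈ Pz n z := Qset_mem_Pz hz0 hsuper hdisj hcover' hgpQ
  have hgpM : typeFun π gp = ∑ m ∈ Finset.range k, (z Finset.univ - z (UB π (m + 1))) :=
    tight_typeFun_eq_M hdisj hcover' hgpPz hgpQ.1
  ext x
  constructor
  · rintro ⟨hxPz, hxmax⟩
    have hxleM := typeFun_le_M hdisj hcover' hxPz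
    have hxgeM : typeFun π x ≥ ∑ m ∈ Finset.range k, (z Finset.univ - z (UB π (m + 1))) := by
      rw [← hgpM]; exact hxmax gp hgpPz
    have hxM := le_antisymm hxleM hxgeM
    exact tight_mem_Qset hz0 hdisj hxPz (typeFun_eq_M_tight hz0 hdisj hcover' hxPz hxM)
  · intro hxQ
    have hxPz := Qset_mem_Pz hz0 hsuper hdisj hcover' hxQ
    refine ⟨hxPz, fun y hy => ?_⟩
    rw [tight_typeFun_eq_M hdisj hcover' hxPz hxQ.1]
    exact typeFun_le_M hdisj hcover' hy

end Face
section Forward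

variable {n k : ℕ} {z : Finset (Fin n) → ℝ} {π : Fin k → Finset (Fin n)}

/-- The hyperplane description set. -/
def Rset (n k : ℕ) (z : Finset (Fin n) → ℝ) (π : Fin k → Finset (Fin n)) (q : ℝ) :
    Set (Fin n → ℝ) :=
  {x : Fin n → ℝ |
    (∀ i : Fin k,
      q ≤ (∑ t ∈ π i, x t) / (z (unionUpTo π i) - z (unionBelow π i)) ∧
      (∑ t ∈ π i, x t) / (z (unionUpTo π i) - z (unionBelow π i)) ≤ 1) ∧
    (∀ i j : Fin k, i ≤ j →
      (∑ t ∈ π i, x t) / (z (unionUpTo π i) - z (unionBelow π i)) ≤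
        (∑ t ∈ π j, x t) / (z (unionUpTo π j) - z (unionBelow π j))) ∧
    (∀ i : Fin k, ∀ C D : Finset (Fin n), C.Nonempty → D.Nonempty →
      Disjoint C D → C ∪ D = π i →
      (∑ t ∈ D, x t) / (z (unionUpTo π i) - z (unionBelow π i ∪ C)) ≤
        (∑ t ∈ C, x t) / (z (unionBelow π i ∪ C) - z (unionBelow π i)))}

lemma zd_pos (hstrict : ∀ I J : Finset (Fin n), I ⊂ J → z I < z J)
    (hne : ∀ s, (π s).Nonempty)
    (hdisj : ∀ s t, s ≠ t → Disjoint (π s) (π t))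
    {m : ℕ} (h : m < k) : 0 < z (UB π (m + 1)) - z (UB π m) := by
  rw [sub_pos]
  apply hstrict
  constructor
  · exact PiAux.UB_mono (Nat.le_succ m)
  · intro hsub
    obtain ⟨t, ht⟩ := hne ⟨m, h⟩
    have h1 : t ∈ UB π (m + 1) := PiAux.mem_UB.2 ⟨⟨m, h⟩, Nat.lt_succ_self m, ht⟩
    exact PiAux.notMem_UB_of_mem_block hdisj ht le_rfl (hsub h1)

lemma d2_pos (hstrict : ∀ I J : Finset (Fin n), I ⊂ J → z I < z J)
    (hdisj : ∀ s t, s ≠ t → Disjoint (π s) (π t))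
    (j : Fin k) {C : Finset (Fin n)} (hC : C ⊆ π j) (hCne : C.Nonempty) :
    0 < z (UB π (j : ℕ) ∪ C) - z (UB π (j : ℕ)) := by
  rw [sub_pos]
  apply hstrict
  constructor
  · exact Finset.subset_union_left
  · intro hsub
    obtain ⟨t, ht⟩ := hCne
    have h1 : t ∈ UB π (j : ℕ) ∪ C := Finset.mem_union_right _ ht
    exact PiAux.notMem_UB_of_mem_block hdisj (hC ht) le_rfl (hsub h1)

lemma d1_pos (hstrict : ∀ I J : Finset (Fin n), I ⊂ J → z I < z J)
    (hdisj : ∀ s t, s ≠ t → Disjoint (π s) (π t))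
    (j : Fin k) {C D : Finset (Fin n)} (hC : C ⊆ π j) (hDne : D.Nonempty)
    (hCD : Disjoint C D) (hDsub : D ⊆ π j) :
    0 < z (UB π ((j : ℕ) + 1)) - z (UB π (j : ℕ) ∪ C) := by
  rw [sub_pos]
  apply hstrict
  constructor
  · rw [PiAux.UB_succ j.isLt]
    apply Finset.union_subset_union_right
    simpa [Fin.eta] using hC
  · intro hsub
    obtain ⟨t, ht⟩ := hDne
    have h1 : t ∈ UB π ((j : ℕ) + 1) := by
      rw [PiAux.UB_succ j.isLt]
      exact Finset.mem_union_right _ (by simpa [Fin.eta] using hDsub ht)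
    have h2 := hsub h1
    rcases Finset.mem_union.1 h2 with h3 | h3
    · exact PiAux.notMem_UB_of_mem_block hdisj (hDsub ht) le_rfl h3
    · exact (Finset.disjoint_right.1 hCD ht) h3

lemma sum_comb (a b : ℝ) (x y : Fin n → ℝ) (S : Finset (Fin n)) :
    ∑ t ∈ S, (a • x + b • y) t = a * ∑ t ∈ S, x t + b * ∑ t ∈ S, y t := by
  simp only [Pi.add_apply, Pi.smul_apply, smul_eq_mul, Finset.sum_add_distrib,
    Finset.mul_sum]

lemma Rset_convex (q : ℝ) : Convex ℝ (Rset n k z π q) := by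
  intro x hx y hy a b ha hb hab
  obtain ⟨hx1, hx2, hx3⟩ := hx
  obtain ⟨hy1, hy2, hy3⟩ := hy
  refine ⟨fun i => ?_, fun i j hij => ?_, fun i C D hC hD hCD hun => ?_⟩
  · obtain ⟨hxa, hxb⟩ := hx1 i
    obtain ⟨hya, hyb⟩ := hy1 i
    rw [sum_comb, add_div, mul_div_assoc, mul_div_assoc]
    constructor
    · nlinarith [mul_le_mul_of_nonneg_left hxa ha, mul_le_mul_of_nonneg_left hya hb]
    · nlinarith [mul_le_mul_of_nonneg_left hxb ha, mul_le_mul_of_nonneg_left hyb hb]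
  · have h1 := hx2 i j hij
    have h2 := hy2 i j hij
    rw [sum_comb, sum_comb, add_div, add_div, mul_div_assoc, mul_div_assoc,
      mul_div_assoc, mul_div_assoc]
    nlinarith [mul_le_mul_of_nonneg_left h1 ha, mul_le_mul_of_nonneg_left h2 hb]
  · have h1 := hx3 i C D hC hD hCD hun
    have h2 := hy3 i C D hC hD hCD hun
    rw [sum_comb, sum_comb, add_div, add_div, mul_div_assoc, mul_div_assoc,
      mul_div_assoc, mul_div_assoc]
    nlinarith [mul_le_mul_of_nonneg_left h1 ha, mul_le_mul_of_nonneg_left h2 hb]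

lemma scaleMap_apply (q : ℝ) (i : Fin (k + 1)) (x : Fin n → ℝ) (t : Fin n) :
    scaleMap π q i x t = if t ∈ UB π (i : ℕ) then q * x t else x t := rfl

lemma scaleMap_sum (hdisj : ∀ s t, s ≠ t → Disjoint (π s) (π t))
    (q : ℝ) (i : Fin (k + 1)) (x : Fin n → ℝ) {j : Fin k} {C : Finset (Fin n)}
    (hC : C ⊆ π j) :
    ∑ t ∈ C, scaleMap π q i x t
      = (if (j : ℕ) < (i : ℕ) then q else 1) * ∑ t ∈ C, x t := by
  have hmem : ∀ t ∈ C, (t ∈ UB π (i : ℕ)) = ((j : ℕ) < (i : ℕ)) := by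
    intro t ht
    simp only [eq_iff_iff]
    constructor
    · intro h
      obtain ⟨s, hs, hts⟩ := PiAux.mem_UB.1 h
      rwa [PiAux.block_eq hdisj hts (hC ht)] at hs
    · intro h
      exact PiAux.mem_UB.2 ⟨j, h, hC ht⟩
  by_cases h : (j : ℕ) < (i : ℕ)
  · rw [if_pos h, Finset.mul_sum]
    apply Finset.sum_congr rfl
    intro t ht
    rw [scaleMap_apply, if_pos (by rw [hmem t ht]; exact h)]
  · rw [if_neg h, one_mul]
    apply Finset.sum_congr rfl
    intro t ht
    rw [scaleMap_apply, if_neg (by rw [hmem t ht]; exact h)]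

lemma Qset_block_sum (hdisj : ∀ s t, s ≠ t → Disjoint (π s) (π t))
    {x : Fin n → ℝ} (hx : x ∈ Qset n k z π) (j : Fin k) :
    ∑ t ∈ π j, x t = z (UB π ((j : ℕ) + 1)) - z (UB π (j : ℕ)) := by
  have h1 := hx.1 (j : ℕ) j.isLt.le
  have h2 := hx.1 ((j : ℕ) + 1) j.isLt
  have h3 := PiAux.sum_UB_succ (π := π) hdisj j.isLt x
  rw [Fin.eta] at h3
  linarith

lemma scale_mem_R (hz0 : z ∅ = 0)
    (hstrict : ∀ I J : Finset (Fin n), I ⊂ J → z I < z J)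
    (hne : ∀ s, (π s).Nonempty)
    (hdisj : ∀ s t, s ≠ t → Disjoint (π s) (π t))
    {q : ℝ} (hq0 : 0 ≤ q) (hq1 : q ≤ 1)
    (i : Fin (k + 1)) {x : Fin n → ℝ} (hx : x ∈ Qset n k z π) :
    scaleMap π q i x ∈ Rset n k z π q := by
  have hzd : ∀ j : Fin k, 0 < z (unionUpTo π j) - z (unionBelow π j) := by
    intro j
    rw [PiAux.unionUpTo_eq, PiAux.unionBelow_eq]
    exact zd_pos hstrict hne hdisj j.isLt
  have hzd' : ∀ j : Fin k, 0 < z (UB π ((j : ℕ) + 1)) - z (UB π (j : ℕ)) :=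
    fun j => zd_pos hstrict hne hdisj j.isLt
  have hratio : ∀ j : Fin k,
      (∑ t ∈ π j, scaleMap π q i x t) / (z (unionUpTo π j) - z (unionBelow π j))
        = if (j : ℕ) < (i : ℕ) then q else 1 := by
    intro j
    rw [scaleMap_sum hdisj q i x (subset_refl (π j)),
      Qset_block_sum hdisj hx j, PiAux.unionUpTo_eq, PiAux.unionBelow_eq,
      mul_div_assoc, div_self (ne_of_gt (hzd' j)), mul_one]
  refine ⟨fun j => ?_, fun j j' hjj' => ?_, fun j C D hCne hDne hCD hun => ?_⟩
  · rw [hratio j]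
    split_ifs
    · exact ⟨le_refl q, hq1⟩
    · exact ⟨hq1, le_refl 1⟩
  · rw [hratio j, hratio j']
    split_ifs with h1 h2 h2
    · exact le_refl q
    · exact hq1
    · exact absurd (lt_of_le_of_lt (show (j : ℕ) ≤ (j' : ℕ) from hjj') h2) h1
    · exact le_refl 1
  · -- facial inequality
    have hCsub : C ⊆ π j := hun ▸ Finset.subset_union_left
    have hDsub : D ⊆ π j := hun ▸ Finset.subset_union_right
    have hd2 := d2_pos hstrict hdisj j hCsub hCne
    have hd1 := d1_pos hstrict hdisj j hCsub hDne hCD hDsub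
    rw [PiAux.unionUpTo_eq, PiAux.unionBelow_eq,
      scaleMap_sum hdisj q i x hCsub, scaleMap_sum hdisj q i x hDsub]
    set c : ℝ := if (j : ℕ) < (i : ℕ) then q else 1 with hc
    have hc0 : 0 ≤ c := by rw [hc]; split_ifs; exact hq0; norm_num
    have hCx : z (UB π (j : ℕ) ∪ C) - z (UB π (j : ℕ)) ≤ ∑ t ∈ C, x t := by
      have := hx.2 j C hCsub
      linarith
    have hDx : ∑ t ∈ D, x t ≤ z (UB π ((j : ℕ) + 1)) - z (UB π (j : ℕ) ∪ C) := by
      have hsplit : ∑ t ∈ C, x t + ∑ t ∈ D, x t = ∑ t ∈ π j, x t := by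
        rw [← Finset.sum_union hCD, hun]
      have hblk := Qset_block_sum hdisj hx j
      linarith
    rw [div_le_div_iff₀ hd1 hd2]
    nlinarith [mul_le_mul_of_nonneg_left hDx hc0, mul_le_mul_of_nonneg_left hCx hc0,
      mul_pos hd1 hd2]

lemma piLift_subset_Rset (hz0 : z ∅ = 0)
    (hsuper : ∀ I J : Finset (Fin n), z I + z J ≤ z (I ∪ J) + z (I ∩ J))
    (hstrict : ∀ I J : Finset (Fin n), I ⊂ J → z I < z J)
    (hne : ∀ s, (π s).Nonempty)
    (hdisj : ∀ s t, s ≠ t → Disjoint (π s) (π t))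
    (hcover : ∀ i : Fin n, ∃ s, i ∈ π s)
    {q : ℝ} (hq0 : 0 ≤ q) (hq1 : q ≤ 1) :
    piLift k z π q ⊆ Rset n k z π q := by
  apply convexHull_min _ (Rset_convex q)
  apply Set.iUnion_subset
  intro i
  rintro y ⟨x, hxface, rfl⟩
  rw [Pface_eq_Qset hz0 hsuper hdisj hcover] at hxface
  exact scale_mem_R hz0 hstrict hne hdisj hq0 hq1 i hxface

end Forward
section Reverse

variable {n k : ℕ} {z : Finset (Fin n) → ℝ} {π : Fin k → Finset (Fin n)}

lemma Rset_subset_piLift (hz0 : z ∅ = 0)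
    (hsuper : ∀ I J : Finset (Fin n), z I + z J ≤ z (I ∪ J) + z (I ∩ J))
    (hstrict : ∀ I J : Finset (Fin n), I ⊂ J → z I < z J)
    (hne : ∀ s, (π s).Nonempty)
    (hdisj : ∀ s t, s ≠ t → Disjoint (π s) (π t))
    (hcover : ∀ i : Fin n, ∃ s, i ∈ π s)
    {q : ℝ} (hq0 : 0 ≤ q) (hq1 : q ≤ 1) :
    Rset n k z π q ⊆ piLift k z π q := by
  intro x hx
  obtain ⟨hx1, hx2, hx3⟩ := hx
  classical
  have hzd : ∀ j : Fin k, 0 < z (UB π ((j : ℕ) + 1)) - z (UB π (j : ℕ)) :=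
    fun j => zd_pos hstrict hne hdisj j.isLt
  set r : Fin k → ℝ :=
    fun j => (∑ t ∈ π j, x t) / (z (UB π ((j : ℕ) + 1)) - z (UB π (j : ℕ))) with hr
  have hconv : ∀ j : Fin k,
      (∑ t ∈ π j, x t) / (z (unionUpTo π j) - z (unionBelow π j)) = r j := by
    intro j
    rw [PiAux.unionUpTo_eq, PiAux.unionBelow_eq, hr]
  have hrq : ∀ j, q ≤ r j := fun j => hconv j ▸ (hx1 j).1
  have hr1 : ∀ j, r j ≤ 1 := fun j => hconv j ▸ (hx1 j).2
  have hrmono : ∀ j j' : Fin k, j ≤ j' → r j ≤ r j' := by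
    intro j j' h
    have h2 := hx2 j j' h
    rwa [hconv j, hconv j'] at h2
  have hxblock : ∀ j : Fin k,
      ∑ t ∈ π j, x t = r j * (z (UB π ((j : ℕ) + 1)) - z (UB π (j : ℕ))) := by
    intro j
    rw [hr]
    simp only
    rw [div_mul_cancel₀ _ (ne_of_gt (hzd j))]
  have hUBun : ∀ j : Fin k, UB π (j : ℕ) ∪ π j = UB π ((j : ℕ) + 1) := by
    intro j
    rw [PiAux.UB_succ j.isLt, Fin.eta]
  have hkey : ∀ j : Fin k, ∀ C ⊆ π j,
      r j * (z (UB π (j : ℕ) ∪ C) - z (UB π (j : ℕ))) ≤ ∑ t ∈ C, x t := by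
    intro j C hC
    rcases C.eq_empty_or_nonempty with rfl | hCne
    · simp
    by_cases hCfull : C = π j
    · subst hCfull
      rw [hUBun j, ← hxblock j]
    · set D := π j \ C with hD
      have hDne : D.Nonempty := by
        rw [hD, Finset.sdiff_nonempty]
        intro hsub
        exact hCfull (Finset.Subset.antisymm hC hsub)
      have hdisjCD : Disjoint C D := Finset.disjoint_sdiff
      have hun : C ∪ D = π j := Finset.union_sdiff_of_subset hC
      have hfac := hx3 j C D hCne hDne hdisjCD hun
      rw [PiAux.unionUpTo_eq, PiAux.unionBelow_eq] at hfac
      have hd2 := d2_pos hstrict hdisj j hC hCne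
      have hd1 := d1_pos hstrict hdisj j hC hDne hdisjCD (hD ▸ Finset.sdiff_subset)
      rw [div_le_div_iff₀ hd1 hd2] at hfac
      have hsplit : ∑ t ∈ C, x t + ∑ t ∈ D, x t = ∑ t ∈ π j, x t := by
        rw [← Finset.sum_union hdisjCD, hun]
      have hblk2 : ∑ t ∈ C, x t + ∑ t ∈ D, x t
          = r j * ((z (UB π ((j : ℕ) + 1)) - z (UB π (j : ℕ) ∪ C))
            + (z (UB π (j : ℕ) ∪ C) - z (UB π (j : ℕ)))) := by
        rw [hsplit, hxblock j]
        ring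
      have hdd : 0 < (z (UB π ((j : ℕ) + 1)) - z (UB π (j : ℕ) ∪ C))
          + (z (UB π (j : ℕ) ∪ C) - z (UB π (j : ℕ))) := by linarith
      apply le_of_mul_le_mul_right _ hdd
      nlinarith [hfac, hblk2]
  have hx0 : ∀ j : Fin k, r j = 0 → ∀ t ∈ π j, x t = 0 := by
    intro j hrj t ht
    have h1 := hkey j {t} (Finset.singleton_subset_iff.2 ht)
    rw [hrj, zero_mul, Finset.sum_singleton] at h1
    have h2 := hkey j ((π j).erase t) (Finset.erase_subset t (π j))
    rw [hrj, zero_mul] at h2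
    have h3 := Finset.add_sum_erase (π j) x ht
    have h4 := hxblock j
    rw [hrj, zero_mul] at h4
    linarith
  by_cases hq : q = 1
  · -- case q = 1
    have hrall : ∀ j, r j = 1 := fun j => le_antisymm (hr1 j) (hq ▸ hrq j)
    have hxQ : x ∈ Qset n k z π := by
      constructor
      · intro m
        induction m with
        | zero => intro _; simp [PiAux.UB_zero, hz0]
        | succ m ih =>
          intro hm
          have hmk : m < k := hm
          rw [PiAux.sum_UB_succ hdisj hmk x, ih hmk.le]
          have hb := hxblock ⟨m, hmk⟩
          rw [hrall ⟨m, hmk⟩, one_mul] at hb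
          rw [hb]
          ring
      · intro j C hC
        have h := hkey j C hC
        rw [hrall j, one_mul] at h
        linarith
    rw [← Pface_eq_Qset hz0 hsuper hdisj hcover] at hxQ
    have hident : scaleMap π q 0 x = x := by
      funext t
      rw [scaleMap_apply, if_neg]
      simp [PiAux.UB_zero]
    apply subset_convexHull
    exact Set.mem_iUnion.2 ⟨0, ⟨x, hxQ, hident⟩⟩
  · -- case q < 1
    have h1q : 0 < 1 - q := by
      have : q < 1 := lt_of_le_of_ne hq1 hq
      linarith
    choose bi hbi using hcover
    have hcover' : ∀ i : Fin n, ∃ s, i ∈ π s := fun i => ⟨bi i, hbi i⟩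
    set u : Fin n → ℝ := fun t =>
      if r (bi t) = 0 then greedyPt z (UB π ((bi t : ℕ))) (π (bi t)) t
      else x t / r (bi t) with hu
    have hbieq : ∀ (j : Fin k) (t : Fin n), t ∈ π j → bi t = j :=
      fun j t ht => PiAux.block_eq hdisj (hbi t) ht
    have hublock : ∀ (j : Fin k) (C : Finset (Fin n)), C ⊆ π j → r j ≠ 0 →
        ∑ t ∈ C, u t = (∑ t ∈ C, x t) / r j := by
      intro j C hC hrj
      rw [Finset.sum_div]
      apply Finset.sum_congr rfl
      intro t ht
      simp only [hu, hbieq j t (hC ht)]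
      rw [if_neg hrj]
    have hugreedy : ∀ (j : Fin k) (C : Finset (Fin n)), C ⊆ π j → r j = 0 →
        ∑ t ∈ C, u t = ∑ t ∈ C, greedyPt z (UB π (j : ℕ)) (π j) t := by
      intro j C hC hrj
      apply Finset.sum_congr rfl
      intro t ht
      simp only [hu, hbieq j t (hC ht)]
      rw [if_pos hrj]
    have husum : ∀ j : Fin k,
        ∑ t ∈ π j, u t = z (UB π ((j : ℕ) + 1)) - z (UB π (j : ℕ)) := by
      intro j
      by_cases hrj : r j = 0
      · rw [hugreedy j (π j) (subset_refl _) hrj, greedyPt_sum_eq z hz0, hUBun j]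
      · rw [hublock j (π j) (subset_refl _) hrj, hxblock j, mul_comm,
          mul_div_assoc, div_self hrj, mul_one]
    have huQ : u ∈ Qset n k z π := by
      constructor
      · intro m
        induction m with
        | zero => intro _; simp [PiAux.UB_zero, hz0]
        | succ m ih =>
          intro hm
          have hmk : m < k := hm
          rw [PiAux.sum_UB_succ hdisj hmk u, ih hmk.le, husum ⟨m, hmk⟩]
          ring
      · intro j C hC
        by_cases hrj : r j = 0
        · rw [hugreedy j C hC hrj]
          have h := greedyPt_sum_ge z hsuper (UB π (j : ℕ)) (π j) C hC
          linarith
        · rw [hublock j C hC hrj]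
          have hrpos : 0 < r j := lt_of_le_of_ne (le_trans hq0 (hrq j)) (Ne.symm hrj)
          have hk' := hkey j C hC
          have h5 : z (UB π (j : ℕ) ∪ C) - z (UB π (j : ℕ)) ≤ (∑ t ∈ C, x t) / r j := by
            rw [le_div_iff₀ hrpos]
            linarith [hk']
          linarith
    rw [← Pface_eq_Qset hz0 hsuper hdisj hcover'] at huQ
    -- the weights
    set g : ℕ → ℝ := fun m =>
      if m = 0 then 0 else if h : m - 1 < k then (r ⟨m - 1, h⟩ - q) / (1 - q) else 1
      with hg
    have hg0 : g 0 = 0 := by simp [hg]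
    have hgval : ∀ (m : ℕ) (h : m < k), g (m + 1) = (r ⟨m, h⟩ - q) / (1 - q) := by
      intro m h
      simp only [hg, Nat.succ_ne_zero, if_false, Nat.add_sub_cancel]
      rw [dif_pos h]
    have hgbig : ∀ m : ℕ, k ≤ m → g (m + 1) = 1 := by
      intro m h
      simp only [hg, Nat.succ_ne_zero, if_false, Nat.add_sub_cancel]
      rw [dif_neg (by omega)]
    have hgmono : ∀ m, g m ≤ g (m + 1) := by
      intro m
      rcases Nat.eq_zero_or_pos m with rfl | hmpos
      · rw [hg0]
        by_cases h : 0 < k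
        · rw [hgval 0 h]
          apply div_nonneg _ h1q.le
          linarith [hrq ⟨0, h⟩]
        · rw [hgbig 0 (by omega)]
          norm_num
      · obtain ⟨m', rfl⟩ := Nat.exists_eq_succ_of_ne_zero hmpos.ne'
        by_cases h1 : m' < k
        · rw [hgval m' h1]
          by_cases h2 : m' + 1 < k
          · rw [hgval (m' + 1) h2]
            have hmn := hrmono ⟨m', h1⟩ ⟨m' + 1, h2⟩ (by
              rw [Fin.mk_le_mk]; omega)
            rw [div_le_div_iff₀ h1q h1q]
            nlinarith
          · rw [hgbig (m' + 1) (by omega), div_le_one h1q]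
            linarith [hr1 ⟨m', h1⟩]
        · rw [hgbig (m' + 1) (by omega)]
          have : g (m' + 1) = 1 := hgbig m' (by omega)
          rw [this]
    set w : Fin (k + 1) → ℝ := fun i => g ((i : ℕ) + 1) - g (i : ℕ) with hw
    have hw0 : ∀ i, 0 ≤ w i := fun i => sub_nonneg.2 (hgmono _)
    have hpartial : ∀ m : ℕ, m ≤ k + 1 →
        ∑ i ∈ Finset.univ.filter (fun i : Fin (k + 1) => (i : ℕ) < m), w i = g m := by
      intro m
      induction m with
      | zero =>
        intro _
        rw [hg0]
        convert Finset.sum_empty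
        ext i
        simp
      | succ m ih =>
        intro hm
        have hmk : m < k + 1 := hm
        have hins : Finset.univ.filter (fun i : Fin (k + 1) => (i : ℕ) < m + 1)
            = insert ⟨m, hmk⟩ (Finset.univ.filter (fun i : Fin (k + 1) => (i : ℕ) < m)) := by
          ext i
          simp only [Finset.mem_filter, Finset.mem_univ, true_and, Finset.mem_insert]
          constructor
          · intro h
            rcases Nat.lt_succ_iff_lt_or_eq.1 h with h' | h'
            · exact Or.inr h'
            · exact Or.inl (Fin.ext h')
          · rintro (rfl | h)
            · exact Nat.lt_succ_self m
            · exact Nat.lt_succ_of_lt h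
        have hnotmem : (⟨m, hmk⟩ : Fin (k + 1)) ∉
            Finset.univ.filter (fun i : Fin (k + 1) => (i : ℕ) < m) := by simp
        rw [hins, Finset.sum_insert hnotmem, ih (Nat.le_of_succ_le hm)]
        simp only [hw]
        ring
    have hfiltuniv : Finset.univ.filter (fun i : Fin (k + 1) => (i : ℕ) < k + 1)
        = Finset.univ := by
      apply Finset.filter_true_of_mem
      intro i _
      exact i.isLt
    have hwsum : ∑ i, w i = 1 := by
      have h1 := hpartial (k + 1) le_rfl
      rw [hfiltuniv] at h1
      rw [h1, hgbig k le_rfl]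
    have hSle : ∀ j : Fin k,
        ∑ i ∈ Finset.univ.filter (fun i : Fin (k + 1) => (i : ℕ) ≤ (j : ℕ)), w i
          = (r j - q) / (1 - q) := by
      intro j
      have hfeq : Finset.univ.filter (fun i : Fin (k + 1) => (i : ℕ) ≤ (j : ℕ))
          = Finset.univ.filter (fun i : Fin (k + 1) => (i : ℕ) < (j : ℕ) + 1) := by
        apply Finset.filter_congr
        intro i _
        simp [Nat.lt_succ_iff]
      rw [hfeq, hpartial ((j : ℕ) + 1) (by omega), hgval (j : ℕ) j.isLt, Fin.eta]
    have hcomb : ∑ i : Fin (k + 1), w i • scaleMap π q i u = x := by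
      funext t
      rw [Finset.sum_apply]
      have htj : t ∈ π (bi t) := hbi t
      set j : Fin k := bi t with hj
      have hterm : ∀ i : Fin (k + 1), (w i • scaleMap π q i u) t
          = w i * (if (j : ℕ) < (i : ℕ) then q * u t else u t) := by
        intro i
        rw [Pi.smul_apply, smul_eq_mul, scaleMap_apply]
        congr 1
        by_cases h : (j : ℕ) < (i : ℕ)
        · rw [if_pos h, if_pos (PiAux.mem_UB.2 ⟨j, h, htj⟩)]
        · rw [if_neg h, if_neg]
          intro hmem
          obtain ⟨s, hs, hts⟩ := PiAux.mem_UB.1 hmem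
          rw [PiAux.block_eq hdisj hts htj] at hs
          exact h hs
      rw [Finset.sum_congr rfl (fun i _ => hterm i),
        ← Finset.sum_filter_add_sum_filter_not Finset.univ
          (fun i : Fin (k + 1) => (i : ℕ) ≤ (j : ℕ))]
      have hA : ∑ i ∈ Finset.univ.filter (fun i : Fin (k + 1) => (i : ℕ) ≤ (j : ℕ)),
          w i * (if (j : ℕ) < (i : ℕ) then q * u t else u t)
            = ((r j - q) / (1 - q)) * u t := by
        rw [← hSle j, Finset.sum_mul]
        apply Finset.sum_congr rfl
        intro i hi
        simp only [Finset.mem_filter] at hi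
        rw [if_neg (by omega)]
      have hnotsum : ∑ i ∈ Finset.univ.filter
          (fun i : Fin (k + 1) => ¬ (i : ℕ) ≤ (j : ℕ)), w i = (1 - r j) / (1 - q) := by
        have h6 := Finset.sum_filter_add_sum_filter_not Finset.univ
          (fun i : Fin (k + 1) => (i : ℕ) ≤ (j : ℕ)) w
        rw [hSle j, hwsum] at h6
        rw [eq_div_iff (ne_of_gt h1q)]
        have h7 : (r j - q) / (1 - q) * (1 - q) = r j - q :=
          div_mul_cancel₀ _ (ne_of_gt h1q)
        nlinarith [h6, h7]
      have hB : ∑ i ∈ Finset.univ.filter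
          (fun i : Fin (k + 1) => ¬ (i : ℕ) ≤ (j : ℕ)),
          w i * (if (j : ℕ) < (i : ℕ) then q * u t else u t)
            = ((1 - r j) / (1 - q)) * (q * u t) := by
        rw [← hnotsum, Finset.sum_mul]
        apply Finset.sum_congr rfl
        intro i hi
        simp only [Finset.mem_filter] at hi
        rw [if_pos (by omega)]
      rw [hA, hB]
      have hru : r j * u t = x t := by
        by_cases hrj : r j = 0
        · rw [hrj, zero_mul, hx0 j hrj t htj]
        · simp only [hu, ← hj]
          rw [if_neg hrj, mul_comm, div_mul_cancel₀ _ hrj]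
      calc ((r j - q) / (1 - q)) * u t + ((1 - r j) / (1 - q)) * (q * u t)
          = r j * u t := by
            field_simp
            ring
        _ = x t := hru
    have hmem : ∀ i : Fin (k + 1), scaleMap π q i u
        ∈ ⋃ i : Fin (k + 1), scaleMap π q i '' Pface k z π := by
      intro i
      exact Set.mem_iUnion.2 ⟨i, Set.mem_image_of_mem _ huQ⟩
    have hcm : Finset.univ.centerMass w (fun i : Fin (k + 1) => scaleMap π q i u)
        ∈ piLift k z π q :=
      Finset.centerMass_mem_convexHull _ (fun i _ => hw0 i)
        (by rw [hwsum]; norm_num) (fun i _ => hmem i)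
    rw [Finset.centerMass_eq_of_sum_1 _ _ hwsum, hcomb] at hcm
    exact hcm

end Reverse
/-- Theorem: the `(π,q)`-lifting `P^π(q)` is the set of points satisfying the
simplicial inequalities `q ≤ x_{π_1}/z_π^{π_1} ≤ ⋯ ≤ x_{π_k}/z_π^{π_k} ≤ 1`
and the facial inequalities `x_C/z_{π,i}^C ≥ x_D/z_{π,i}^D` for each `i` and
each partition of `π_i` into disjoint nonempty sets `C`, `D`. -/
theorem piLift_hyperplane_description (n k : ℕ)
    (z : Finset (Fin n) → ℝ) (hz0 : z ∅ = 0)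
    (hsuper : ∀ I J : Finset (Fin n), z I + z J ≤ z (I ∪ J) + z (I ∩ J))
    (hstrict : ∀ I J : Finset (Fin n), I ⊂ J → z I < z J)
    (π : Fin k → Finset (Fin n))
    (hne : ∀ s, (π s).Nonempty)
    (hdisj : ∀ s t, s ≠ t → Disjoint (π s) (π t))
    (hcover : ∀ i : Fin n, ∃ s, i ∈ π s)
    (q : ℝ) (hq0 : 0 ≤ q) (hq1 : q ≤ 1) :
    piLift k z π q =
      {x : Fin n → ℝ |
        (∀ i : Fin k,
          q ≤ (∑ t ∈ π i, x t) / (z (unionUpTo π i) - z (unionBelow π i)) ∧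
          (∑ t ∈ π i, x t) / (z (unionUpTo π i) - z (unionBelow π i)) ≤ 1) ∧
        (∀ i j : Fin k, i ≤ j →
          (∑ t ∈ π i, x t) / (z (unionUpTo π i) - z (unionBelow π i)) ≤
            (∑ t ∈ π j, x t) / (z (unionUpTo π j) - z (unionBelow π j))) ∧
        (∀ i : Fin k, ∀ C D : Finset (Fin n), C.Nonempty → D.Nonempty →
          Disjoint C D → C ∪ D = π i →
          (∑ t ∈ D, x t) / (z (unionUpTo π i) - z (unionBelow π i ∪ C)) ≤
            (∑ t ∈ C, x t) / (z (unionBelow π i ∪ C) - z (unionBelow π i)))} := by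
  show piLift k z π q = Rset n k z π q
  exact Set.Subset.antisymm
    (piLift_subset_Rset hz0 hsuper hstrict hne hdisj hcover hq0 hq1)
    (Rset_subset_piLift hz0 hsuper hstrict hne hdisj hcover hq0 hq1)
end

section
/- Let {z_I}_{I⊆[n]} be supermodular real parameters with z_∅ = 0 and z_I < z_J whenever I ⊊ J ⊆ [n], let P = P_n({z_I}), let π be an ordered partition of [n], and let 0 ≤ q ≤ 1. Then P^π(q) equals the Minkowski sum q·P_π + (1−q)·P^π(0) = { q·a + (1−q)·b : a ∈ P_π, b ∈ P^π(0) }. -/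
/-! ### Auxiliary development -/

open Finset

/-- Prefix union of blocks, matching the index set used in `scaleMap`. -/
def prefW {n k : ℕ} (π : Fin k → Finset (Fin n)) (i : Fin (k + 1)) : Finset (Fin n) :=
  (Finset.univ.filter fun s : Fin k => (s : ℕ) < (i : ℕ)).biUnion π

lemma mem_prefW {n k : ℕ} {π : Fin k → Finset (Fin n)} {i : Fin (k + 1)} {j : Fin n} :
    j ∈ prefW π i ↔ ∃ s : Fin k, (s : ℕ) < (i : ℕ) ∧ j ∈ π s := by
  simp [prefW]

lemma scaleMap_eq {n k : ℕ} (π : Fin k → Finset (Fin n)) (q : ℝ) (i : Fin (k + 1))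
    (x : Fin n → ℝ) (j : Fin n) :
    scaleMap π q i x j = if j ∈ prefW π i then q * x j else x j := rfl

section Main

variable {n k : ℕ} {z : Finset (Fin n) → ℝ} {π : Fin k → Finset (Fin n)}

lemma Pz.convex : Convex ℝ (Pz n z) := by
  intro x hx y hy a b ha hb hab
  constructor
  · simp only [Pi.add_apply, Pi.smul_apply, smul_eq_mul]
    rw [Finset.sum_add_distrib, ← Finset.mul_sum, ← Finset.mul_sum, hx.1, hy.1]
    ring_nf
    linear_combination (z Finset.univ) * hab
  · intro I
    have h1 := hx.2 I
    have h2 := hy.2 I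
    simp only [Pi.add_apply, Pi.smul_apply, smul_eq_mul]
    rw [Finset.sum_add_distrib, ← Finset.mul_sum, ← Finset.mul_sum]
    calc z I = a * z I + b * z I := by rw [← add_mul, hab, one_mul]
      _ ≤ a * ∑ i ∈ I, x i + b * ∑ i ∈ I, y i :=
        add_le_add (mul_le_mul_of_nonneg_left h1 ha) (mul_le_mul_of_nonneg_left h2 hb)

lemma typeFun_comb (a b : ℝ) (x y : Fin n → ℝ) :
    typeFun π (a • x + b • y) = a * typeFun π x + b * typeFun π y := by
  simp only [typeFun, Pi.add_apply, Pi.smul_apply, smul_eq_mul, Finset.mul_sum,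
    ← Finset.sum_add_distrib]
  refine Finset.sum_congr rfl fun s _ => Finset.sum_congr rfl fun i _ => by ring

lemma Pface.convex : Convex ℝ (Pface k z π) := by
  intro x hx y hy a b ha hb hab
  refine ⟨Pz.convex hx.1 hy.1 ha hb hab, fun u hu => ?_⟩
  rw [typeFun_comb]
  calc typeFun π u = a * typeFun π u + b * typeFun π u := by rw [← add_mul, hab, one_mul]
    _ ≤ a * typeFun π x + b * typeFun π y :=
      add_le_add (mul_le_mul_of_nonneg_left (hx.2 u hu) ha)
        (mul_le_mul_of_nonneg_left (hy.2 u hu) hb)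

end Main

section Greedy

variable {n k : ℕ} {z : Finset (Fin n) → ℝ} {π : Fin k → Finset (Fin n)}

/-- The block index of an element. -/
noncomputable def blk (hcover : ∀ i : Fin n, ∃ s, i ∈ π s) (i : Fin n) : Fin k :=
  (hcover i).choose

lemma blk_mem (hcover : ∀ i : Fin n, ∃ s, i ∈ π s) (i : Fin n) : i ∈ π (blk hcover i) :=
  (hcover i).choose_spec

lemma blk_eq (hcover : ∀ i : Fin n, ∃ s, i ∈ π s)
    (hdisj : ∀ s t, s ≠ t → Disjoint (π s) (π t)) {i : Fin n} {s : Fin k} (h : i ∈ π s) :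
    blk hcover i = s := by
  by_contra hne
  exact (Finset.disjoint_left.mp (hdisj _ _ hne) (blk_mem hcover i)) h

/-- A key ordering elements lexicographically by (block, index). -/
noncomputable def Kf (hcover : ∀ i : Fin n, ∃ s, i ∈ π s) (i : Fin n) : ℕ :=
  (blk hcover i : ℕ) * n + (i : ℕ)

lemma Kf_lt_of_blk_lt (hcover : ∀ i : Fin n, ∃ s, i ∈ π s) {i j : Fin n}
    (h : (blk hcover i : ℕ) < (blk hcover j : ℕ)) : Kf hcover i < Kf hcover j := by
  have hi := i.isLt
  calc Kf hcover i < (blk hcover i : ℕ) * n + n := by unfold Kf; omega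
    _ = ((blk hcover i : ℕ) + 1) * n := by ring
    _ ≤ (blk hcover j : ℕ) * n := Nat.mul_le_mul_right n h
    _ ≤ Kf hcover j := Nat.le_add_right _ _

lemma blk_le_of_Kf_le (hcover : ∀ i : Fin n, ∃ s, i ∈ π s) {i j : Fin n}
    (h : Kf hcover i ≤ Kf hcover j) : (blk hcover i : ℕ) ≤ (blk hcover j : ℕ) := by
  by_contra hc
  exact absurd h (not_le.mpr (Kf_lt_of_blk_lt hcover (by omega)))

lemma Kf_inj (hcover : ∀ i : Fin n, ∃ s, i ∈ π s) {i j : Fin n}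
    (h : Kf hcover i = Kf hcover j) : i = j := by
  have hb : (blk hcover i : ℕ) = (blk hcover j : ℕ) :=
    le_antisymm (blk_le_of_Kf_le hcover h.le) (blk_le_of_Kf_le hcover h.ge)
  have : (i : ℕ) = (j : ℕ) := by unfold Kf at h; rw [hb] at h; omega
  exact Fin.ext this

/-- The strict lower set of an element in the greedy order. -/
noncomputable def Af (hcover : ∀ i : Fin n, ∃ s, i ∈ π s) (i : Fin n) : Finset (Fin n) :=
  Finset.univ.filter fun j => Kf hcover j < Kf hcover i

lemma notMem_Af (hcover : ∀ i : Fin n, ∃ s, i ∈ π s) (i : Fin n) : i ∉ Af hcover i := by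
  simp [Af]

/-- The greedy point. -/
noncomputable def gr (hcover : ∀ i : Fin n, ∃ s, i ∈ π s) (z : Finset (Fin n) → ℝ)
    (i : Fin n) : ℝ :=
  z (insert i (Af hcover i)) - z (Af hcover i)

lemma ssets (hcover : ∀ i : Fin n, ∃ s, i ∈ π s) {S : Finset (Fin n)} {m : Fin n}
    (hm : m ∈ S) (hmax : ∀ j ∈ S, Kf hcover j ≤ Kf hcover m) :
    S ∪ Af hcover m = insert m (Af hcover m) ∧ S ∩ Af hcover m = S.erase m := by
  have hsub : S.erase m ⊆ Af hcover m := by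
    intro j hj
    have hjm := Finset.ne_of_mem_erase hj
    have hle := hmax j (Finset.mem_of_mem_erase hj)
    simp only [Af, Finset.mem_filter, Finset.mem_univ, true_and]
    exact lt_of_le_of_ne hle (fun h => hjm (Kf_inj hcover h))
  constructor
  · apply Finset.Subset.antisymm
    · intro j hj
      rcases Finset.mem_union.mp hj with hj | hj
      · rcases eq_or_ne j m with rfl | hne
        · exact Finset.mem_insert_self _ _
        · exact Finset.mem_insert_of_mem (hsub (Finset.mem_erase.mpr ⟨hne, hj⟩))
      · exact Finset.mem_insert_of_mem hj
    · intro j hj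
      rcases Finset.mem_insert.mp hj with rfl | hj
      · exact Finset.mem_union_left _ hm
      · exact Finset.mem_union_right _ hj
  · apply Finset.Subset.antisymm
    · intro j hj
      obtain ⟨hjS, hjA⟩ := Finset.mem_inter.mp hj
      refine Finset.mem_erase.mpr ⟨fun h => ?_, hjS⟩
      exact notMem_Af hcover m (h ▸ hjA)
    · intro j hj
      exact Finset.mem_inter.mpr ⟨Finset.mem_of_mem_erase hj, hsub hj⟩

lemma greedy_ge (hz0 : z ∅ = 0)
    (hsuper : ∀ I J : Finset (Fin n), z I + z J ≤ z (I ∪ J) + z (I ∩ J))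
    (hcover : ∀ i : Fin n, ∃ s, i ∈ π s) (S : Finset (Fin n)) :
    z S ≤ ∑ i ∈ S, gr hcover z i := by
  induction S using Finset.strongInductionOn with
  | _ S ih =>
  rcases S.eq_empty_or_nonempty with rfl | hS
  · simp [hz0]
  obtain ⟨m, hm, hmax⟩ := S.exists_max_image (Kf hcover) hS
  obtain ⟨hU, hI⟩ := ssets hcover hm hmax
  have h := hsuper S (Af hcover m)
  rw [hU, hI] at h
  have hrec := ih (S.erase m) (Finset.erase_ssubset hm)
  have hsum := Finset.sum_erase_add S (gr hcover z) hm
  have hgm : gr hcover z m = z (insert m (Af hcover m)) - z (Af hcover m) := rfl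
  linarith

lemma greedy_tight (hcover : ∀ i : Fin n, ∃ s, i ∈ π s) (hz0 : z ∅ = 0)
    (S : Finset (Fin n))
    (hDC : ∀ i ∈ S, ∀ j, Kf hcover j < Kf hcover i → j ∈ S) :
    ∑ i ∈ S, gr hcover z i = z S := by
  induction S using Finset.strongInductionOn with
  | _ S ih =>
  rcases S.eq_empty_or_nonempty with rfl | hS
  · simp [hz0]
  obtain ⟨m, hm, hmax⟩ := S.exists_max_image (Kf hcover) hS
  obtain ⟨hU, hI⟩ := ssets hcover hm hmax
  have hAm : Af hcover m = S.erase m := by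
    apply Finset.Subset.antisymm
    · intro j hj
      have hjK : Kf hcover j < Kf hcover m := by
        simpa [Af] using hj
      refine Finset.mem_erase.mpr ⟨fun h => ?_, hDC m hm j hjK⟩
      · subst h; exact lt_irrefl _ hjK
    · rw [← hI]; exact Finset.inter_subset_right
  have hDC' : ∀ i ∈ S.erase m, ∀ j, Kf hcover j < Kf hcover i → j ∈ S.erase m := by
    intro i hi j hj
    obtain ⟨him, hiS⟩ := Finset.mem_erase.mp hi
    have hiK : Kf hcover i < Kf hcover m :=
      lt_of_le_of_ne (hmax i hiS) (fun h => him (Kf_inj hcover h))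
    refine Finset.mem_erase.mpr ⟨fun h => ?_, hDC i hiS j hj⟩
    · subst h; exact absurd (hj.trans hiK) (lt_irrefl _)
  have hrec := ih (S.erase m) (Finset.erase_ssubset hm) hDC'
  have hsum := Finset.sum_erase_add S (gr hcover z) hm
  have hins : insert m (Af hcover m) = S := by
    rw [hAm, Finset.insert_erase hm]
  have hgm : gr hcover z m = z (insert m (Af hcover m)) - z (Af hcover m) := rfl
  rw [hins, hAm] at hgm
  linarith

end Greedy

section Formula

variable {n k : ℕ} {z : Finset (Fin n) → ℝ} {π : Fin k → Finset (Fin n)}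

lemma pd (hdisj : ∀ s t, s ≠ t → Disjoint (π s) (π t)) (s : Finset (Fin k)) :
    (↑s : Set (Fin k)).PairwiseDisjoint π := fun a _ b _ hab => hdisj a b hab

lemma sum_prefW (hdisj : ∀ s t, s ≠ t → Disjoint (π s) (π t)) (x : Fin n → ℝ) (i : Fin (k + 1)) :
    ∑ j ∈ prefW π i, x j
      = ∑ s ∈ Finset.univ.filter (fun s : Fin k => (s : ℕ) < (i : ℕ)), ∑ j ∈ π s, x j :=
  Finset.sum_biUnion (pd hdisj _)

lemma sum_univ_blocks (hdisj : ∀ s t, s ≠ t → Disjoint (π s) (π t))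
    (hcover : ∀ i : Fin n, ∃ s, i ∈ π s) (x : Fin n → ℝ) :
    ∑ j, x j = ∑ s : Fin k, ∑ j ∈ π s, x j := by
  have h : (Finset.univ : Finset (Fin n)) = Finset.univ.biUnion π := by
    ext j; simpa using hcover j
  rw [h, Finset.sum_biUnion (pd hdisj _)]

lemma card_filter_lt (s : Fin k) :
    (Finset.univ.filter fun r : Fin k => (r : ℕ) < (s : ℕ)).card = (s : ℕ) := by
  have h : (Finset.univ.filter fun r : Fin k => (r : ℕ) < (s : ℕ)) = Finset.Iio s := by
    ext r
    simp only [Finset.mem_filter, Finset.mem_univ, true_and, Finset.mem_Iio, Fin.lt_def]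
  rw [h, Fin.card_Iio]

lemma typeFun_formula (hdisj : ∀ s t, s ≠ t → Disjoint (π s) (π t))
    (hcover : ∀ i : Fin n, ∃ s, i ∈ π s) (x : Fin n → ℝ) :
    typeFun π x = ∑ r : Fin k, ((∑ j, x j) - ∑ j ∈ prefW π (Fin.succ r), x j) := by
  have hB : ∀ r : Fin k, ∑ j ∈ prefW π (Fin.succ r), x j
      = ∑ s ∈ Finset.univ.filter (fun s : Fin k => ¬ ((r : ℕ) < (s : ℕ))), ∑ j ∈ π s, x j := by
    intro r
    rw [sum_prefW hdisj]
    apply Finset.sum_congr _ (fun _ _ => rfl)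
    apply Finset.filter_congr
    intro s _
    simp only [Fin.val_succ, eq_iff_iff, not_lt]
    omega
  calc typeFun π x = ∑ s : Fin k, (s : ℝ) * ∑ j ∈ π s, x j := by
        simp [typeFun, Finset.mul_sum]
    _ = ∑ s : Fin k, ∑ r : Fin k,
          (if (r : ℕ) < (s : ℕ) then ∑ j ∈ π s, x j else 0) := by
        refine Finset.sum_congr rfl fun s _ => ?_
        rw [← Finset.sum_filter, Finset.sum_const, card_filter_lt, nsmul_eq_mul]
    _ = ∑ r : Fin k, ∑ s : Fin k,
          (if (r : ℕ) < (s : ℕ) then ∑ j ∈ π s, x j else 0) := Finset.sum_comm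
    _ = ∑ r : Fin k, ((∑ j, x j) - ∑ j ∈ prefW π (Fin.succ r), x j) := by
        refine Finset.sum_congr rfl fun r _ => ?_
        rw [← Finset.sum_filter, hB r, sum_univ_blocks hdisj hcover, eq_sub_iff_add_eq,
          Finset.sum_filter_add_sum_filter_not]

lemma prefW_zero : prefW π (0 : Fin (k + 1)) = ∅ := by
  simp [prefW]

lemma typeFun_le_bound (hdisj : ∀ s t, s ≠ t → Disjoint (π s) (π t))
    (hcover : ∀ i : Fin n, ∃ s, i ∈ π s) {x : Fin n → ℝ} (hx : x ∈ Pz n z) :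
    typeFun π x ≤ ∑ r : Fin k, (z Finset.univ - z (prefW π (Fin.succ r))) := by
  rw [typeFun_formula hdisj hcover]
  refine Finset.sum_le_sum fun r _ => ?_
  have := hx.2 (prefW π (Fin.succ r))
  rw [hx.1]
  linarith

lemma typeFun_eq_bound (hdisj : ∀ s t, s ≠ t → Disjoint (π s) (π t))
    (hcover : ∀ i : Fin n, ∃ s, i ∈ π s) {x : Fin n → ℝ} (hx : x ∈ Pz n z)
    (ht : ∀ i : Fin (k + 1), ∑ j ∈ prefW π i, x j = z (prefW π i)) :
    typeFun π x = ∑ r : Fin k, (z Finset.univ - z (prefW π (Fin.succ r))) := by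
  rw [typeFun_formula hdisj hcover]
  refine Finset.sum_congr rfl fun r _ => ?_
  rw [hx.1, ht (Fin.succ r)]

/-- Characterization of the face `P_π` by tightness at the prefix unions. -/
lemma mem_Pface_iff (hz0 : z ∅ = 0)
    (hsuper : ∀ I J : Finset (Fin n), z I + z J ≤ z (I ∪ J) + z (I ∩ J))
    (hdisj : ∀ s t, s ≠ t → Disjoint (π s) (π t))
    (hcover : ∀ i : Fin n, ∃ s, i ∈ π s) (x : Fin n → ℝ) :
    x ∈ Pface k z π ↔ x ∈ Pz n z ∧
      ∀ i : Fin (k + 1), ∑ j ∈ prefW π i, x j = z (prefW π i) := by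
  constructor
  · rintro ⟨hxz, hmax⟩
    refine ⟨hxz, ?_⟩
    -- the greedy point is in `Pz` and is tight
    have hgPz : gr hcover z ∈ Pz n z := by
      refine ⟨?_, greedy_ge hz0 hsuper hcover⟩
      exact greedy_tight hcover hz0 Finset.univ
        (fun i _ j _ => Finset.mem_univ j)
    have hgt : ∀ i : Fin (k + 1),
        ∑ j ∈ prefW π i, gr hcover z j = z (prefW π i) := by
      intro i
      refine greedy_tight hcover hz0 _ ?_
      intro a ha j hj
      obtain ⟨s, hs, has⟩ := mem_prefW.mp ha
      have hba : blk hcover a = s := blk_eq hcover hdisj has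
      have hbj : (blk hcover j : ℕ) ≤ (blk hcover a : ℕ) := blk_le_of_Kf_le hcover hj.le
      exact mem_prefW.mpr ⟨blk hcover j, by omega, blk_mem hcover j⟩
    have h1 : typeFun π (gr hcover z)
        = ∑ r : Fin k, (z Finset.univ - z (prefW π (Fin.succ r))) :=
      typeFun_eq_bound hdisj hcover hgPz hgt
    have h2 := hmax _ hgPz
    have h3 := typeFun_le_bound hdisj hcover hxz
    have heq : typeFun π x = ∑ r : Fin k, (z Finset.univ - z (prefW π (Fin.succ r))) := by
      linarith
    -- deduce termwise tightness
    rw [typeFun_formula hdisj hcover] at heq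
    have hterm : ∀ r : Fin k, r ∈ Finset.univ →
        ((∑ j, x j) - ∑ j ∈ prefW π (Fin.succ r), x j)
          = (z Finset.univ - z (prefW π (Fin.succ r))) := by
      rw [← Finset.sum_eq_sum_iff_of_le]
      · exact heq
      · intro r _
        have := hxz.2 (prefW π (Fin.succ r))
        rw [hxz.1]
        linarith
    intro i
    induction i using Fin.cases with
    | zero => rw [prefW_zero]; simp [hz0]
    | succ r =>
      have := hterm r (Finset.mem_univ r)
      rw [hxz.1] at this
      linarith
  · rintro ⟨hxz, ht⟩
    refine ⟨hxz, fun y hy => ?_⟩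
    rw [typeFun_eq_bound hdisj hcover hxz ht]
    exact typeFun_le_bound hdisj hcover hy

end Formula

section Splice

variable {n k : ℕ} {z : Finset (Fin n) → ℝ} {π : Fin k → Finset (Fin n)}

lemma prefW_mono {i i' : Fin (k + 1)} (h : (i : ℕ) ≤ (i' : ℕ)) : prefW π i ⊆ prefW π i' := by
  intro j hj
  obtain ⟨s, hs, hjs⟩ := mem_prefW.mp hj
  exact mem_prefW.mpr ⟨s, lt_of_lt_of_le hs h, hjs⟩

lemma splice_mem_Pface (hz0 : z ∅ = 0)
    (hsuper : ∀ I J : Finset (Fin n), z I + z J ≤ z (I ∪ J) + z (I ∩ J))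
    (hdisj : ∀ s t, s ≠ t → Disjoint (π s) (π t))
    (hcover : ∀ i : Fin n, ∃ s, i ∈ π s) (i : Fin (k + 1)) {a m : Fin n → ℝ}
    (ha : a ∈ Pface k z π) (hm : m ∈ Pface k z π) :
    (fun j => if j ∈ prefW π i then a j else m j) ∈ Pface k z π := by
  rw [mem_Pface_iff hz0 hsuper hdisj hcover] at ha hm ⊢
  obtain ⟨⟨haT, haI⟩, hat⟩ := ha
  obtain ⟨⟨hmT, hmI⟩, hmt⟩ := hm
  have hsplit : ∀ I : Finset (Fin n),
      ∑ j ∈ I, (if j ∈ prefW π i then a j else m j)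
        = ∑ j ∈ I ∩ prefW π i, a j + ∑ j ∈ I \ prefW π i, m j := by
    intro I
    rw [← Finset.sum_inter_add_sum_sdiff I (prefW π i)
      (fun j => if j ∈ prefW π i then a j else m j)]
    congr 1
    · exact Finset.sum_congr rfl fun j hj => if_pos (Finset.mem_inter.mp hj).2
    · exact Finset.sum_congr rfl fun j hj => if_neg (Finset.mem_sdiff.mp hj).2
  have hdiffsum : ∀ I : Finset (Fin n), ∑ j ∈ I \ prefW π i, m j
      = ∑ j ∈ I ∪ prefW π i, m j - ∑ j ∈ prefW π i, m j := by
    intro I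
    rw [← Finset.union_sdiff_right]
    exact Finset.sum_sdiff_eq_sub Finset.subset_union_right
  refine ⟨⟨?_, ?_⟩, ?_⟩
  · show ∑ j, (if j ∈ prefW π i then a j else m j) = z Finset.univ
    rw [hsplit Finset.univ, Finset.univ_inter]
    have h1 := hdiffsum Finset.univ
    rw [Finset.union_eq_left.mpr (Finset.subset_univ _)] at h1
    rw [h1, hmT, hat i, hmt i]
    ring
  · intro I
    show z I ≤ ∑ j ∈ I, (if j ∈ prefW π i then a j else m j)
    rw [hsplit I, hdiffsum I]
    have h1 := haI (I ∩ prefW π i)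
    have h2 := hmI (I ∪ prefW π i)
    have h3 := hmt i
    have h4 := hsuper I (prefW π i)
    linarith
  · intro i'
    show ∑ j ∈ prefW π i', (if j ∈ prefW π i then a j else m j) = z (prefW π i')
    rcases le_or_gt (i' : ℕ) (i : ℕ) with h | h
    · have hsub : prefW π i' ⊆ prefW π i := prefW_mono h
      rw [hsplit, Finset.inter_eq_left.mpr hsub, Finset.sdiff_eq_empty_iff_subset.mpr hsub]
      simpa using hat i'
    · have hsub : prefW π i ⊆ prefW π i' := prefW_mono h.le
      rw [hsplit, Finset.inter_eq_right.mpr hsub, hdiffsum,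
        Finset.union_eq_left.mpr hsub, hat i, hmt i', hmt i]
      ring

end Splice

/-- Theorem: the `(π,q)`-lifting decomposes as the Minkowski sum
`P^π(q) = q·P_π + (1−q)·P^π(0)`. -/
theorem piLift_minkowski (n k : ℕ)
    (z : Finset (Fin n) → ℝ) (hz0 : z ∅ = 0)
    (hsuper : ∀ I J : Finset (Fin n), z I + z J ≤ z (I ∪ J) + z (I ∩ J))
    (hstrict : ∀ I J : Finset (Fin n), I ⊂ J → z I < z J)
    (π : Fin k → Finset (Fin n))
    (hne : ∀ s, (π s).Nonempty)
    (hdisj : ∀ s t, s ≠ t → Disjoint (π s) (π t))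
    (hcover : ∀ i : Fin n, ∃ s, i ∈ π s)
    (q : ℝ) (hq0 : 0 ≤ q) (hq1 : q ≤ 1) :
    piLift k z π q =
      {x | ∃ a ∈ Pface k z π, ∃ b ∈ piLift k z π 0, x = q • a + (1 - q) • b} := by
  apply Set.Subset.antisymm
  · -- `⊆`: the right-hand side is convex and contains each `P_π^i(q)`.
    apply convexHull_min
    · rintro x hx
      simp only [Set.mem_iUnion] at hx
      obtain ⟨i, y, hy, rfl⟩ := hx
      refine ⟨y, hy, scaleMap π 0 i y, ?_, ?_⟩
      · exact subset_convexHull ℝ _ (Set.mem_iUnion.mpr ⟨i, Set.mem_image_of_mem _ hy⟩)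
      · funext j
        show scaleMap π q i y j = q * y j + (1 - q) * scaleMap π 0 i y j
        rw [scaleMap_eq, scaleMap_eq]
        by_cases hj : j ∈ prefW π i
        · rw [if_pos hj, if_pos hj]; ring
        · rw [if_neg hj, if_neg hj]; ring
    · rintro x1 ⟨a1, ha1, b1, hb1, rfl⟩ x2 ⟨a2, ha2, b2, hb2, rfl⟩ α β hα hβ hαβ
      refine ⟨α • a1 + β • a2, Pface.convex ha1 ha2 hα hβ hαβ,
        α • b1 + β • b2, (convex_convexHull ℝ _) hb1 hb2 hα hβ hαβ, by module⟩
  · -- `⊇`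
    rintro x ⟨a, ha, b, hb, rfl⟩
    have hTconv : Convex ℝ {y : Fin n → ℝ | q • a + (1 - q) • y ∈ piLift k z π q} := by
      intro y1 hy1 y2 hy2 α β hα hβ hαβ
      have hcomb : α • (q • a + (1 - q) • y1) + β • (q • a + (1 - q) • y2)
          ∈ piLift k z π q := (convex_convexHull ℝ _) hy1 hy2 hα hβ hαβ
      have hrw : q • a + (1 - q) • (α • y1 + β • y2)
          = α • (q • a + (1 - q) • y1) + β • (q • a + (1 - q) • y2) := by
        calc q • a + (1 - q) • (α • y1 + β • y2)
            = (α + β) • (q • a) + (1 - q) • (α • y1 + β • y2) := by rw [hαβ, one_smul]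
          _ = α • (q • a + (1 - q) • y1) + β • (q • a + (1 - q) • y2) := by module
      show q • a + (1 - q) • (α • y1 + β • y2) ∈ piLift k z π q
      rw [hrw]
      exact hcomb
    have hT : (⋃ i : Fin (k + 1), scaleMap π 0 i '' Pface k z π)
        ⊆ {y : Fin n → ℝ | q • a + (1 - q) • y ∈ piLift k z π q} := by
      rintro y hy
      simp only [Set.mem_iUnion] at hy
      obtain ⟨i, w, hw, rfl⟩ := hy
      show q • a + (1 - q) • scaleMap π 0 i w ∈ piLift k z π q
      have hmF : q • a + (1 - q) • w ∈ Pface k z π :=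
        Pface.convex ha hw hq0 (by linarith) (by ring)
      have hcF : (fun j => if j ∈ prefW π i then a j
          else (q • a + (1 - q) • w) j) ∈ Pface k z π :=
        splice_mem_Pface hz0 hsuper hdisj hcover i ha hmF
      have hkey : scaleMap π q i (fun j => if j ∈ prefW π i then a j
            else (q • a + (1 - q) • w) j)
          = q • a + (1 - q) • scaleMap π 0 i w := by
        funext j
        show scaleMap π q i _ j = q * a j + (1 - q) * scaleMap π 0 i w j
        rw [scaleMap_eq, scaleMap_eq]
        by_cases hj : j ∈ prefW π i
        · rw [if_pos hj, if_pos hj, if_pos hj]; ring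
        · rw [if_neg hj, if_neg hj, if_neg hj]
          show (q • a + (1 - q) • w) j = _
          simp only [Pi.add_apply, Pi.smul_apply, smul_eq_mul]
      rw [← hkey]
      exact subset_convexHull ℝ _ (Set.mem_iUnion.mpr ⟨i, Set.mem_image_of_mem _ hcF⟩)
    exact convexHull_min hT hTconv hb
end

section
/- Let c = (c_1,…,c_k) be a composition of size n with partial sums β_j = c_1+⋯+c_j, and write the reduced composition polynomial as f_c(q) = Σ_{i=0}^{n−k} f_i q^i. Then for each 0 ≤ i ≤ n−k, f_i = Σ_{j : β_j ≤ i} (1/∏_{l≠j}(β_l − β_j)) · C(k + i − β_j − 1, i − β_j), where C(a,b) denotes the binomial coefficient (so C(k+m−1, m) is the number of multisets of size m from a set of k elements). -/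
open MeasureTheory

/-- Iterated integral defining the composition polynomial, peeling off the
outermost variable first (so the list argument is the reversed composition). -/
noncomputable def gAux : List ℕ → ℝ → ℝ → ℝ
  | [], _, _ => 1
  | a :: rest, q, u => ∫ t in q..u, t ^ (a - 1) * gAux rest q t

/-- The composition polynomial
`g_c(q) = ∫_q^1 ∫_q^{t_k} ⋯ ∫_q^{t_2} t_1^{c_1-1} ⋯ t_k^{c_k-1} dt_1 ⋯ dt_k`. -/
noncomputable def gcomp (c : List ℕ) (q : ℝ) : ℝ := gAux c.reverse q 1

/-- Partial sums `β_j = c_1 + ⋯ + c_j`. -/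
def beta (c : List ℕ) (j : ℕ) : ℕ := (c.take j).sum

/-!
Proof idea. Integrating one variable at a time shows, by induction on `k`, that
`∫_q^u t_k^{c_k-1} ⋯ = Σ_j w_j q^{β_j} u^{n-β_j}` with `w_j = 1/∏_{l≠j}(β_l - β_j)`: integrating
`q^{β_j} t^{c_{k+1}-1+n-β_j}` divides `w_j` by the new factor `β_{k+1} - β_j`, and the lower limit
contributes `-q^{β_{k+1}} Σ_j w_j / (β_{k+1} - β_j)`, which is the new term `j = k+1` because the
weights of a node set sum to zero (up to sign, this sum is the `X^{k+1}` coefficient of the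
Lagrange interpolant of `1` on the nodes `β_0, …, β_{k+1}`).
At `u = 1` this says `(1 - q)^k f_c(q) = Σ_j w_j q^{β_j}`, and multiplying by
`(1 - q)^{-k} = Σ_m C(k+m-1, m) q^m` gives the coefficients.
-/

open Finset Polynomial

theorem Lagrange.sum_inv_prod_sub_eq_zero {F ι : Type*} [Field F] [DecidableEq ι]
    {s : Finset ι} {v : ι → F} (hvs : Set.InjOn v s) (hs : 1 < #s) :
    ∑ j ∈ s, (∏ l ∈ s.erase j, (v l - v j))⁻¹ = 0 := by
  have hnvs : Set.InjOn (-v) s := fun i hi j hj h => hvs hi hj (neg_inj.mp h)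
  have h := Lagrange.coeff_eq_sum hnvs (P := 1)
    (by rw [degree_one]; exact_mod_cast hs.trans' one_pos)
  rw [coeff_one, if_neg (by omega)] at h
  simpa [neg_add_eq_sub, eq_comm] using h

theorem PowerSeries.coeff_invOneSubPow_val {R : Type*} [CommRing R] (k m : ℕ) :
    coeff m (invOneSubPow R k).val = (k + m - 1).choose m := by
  cases k with
  | zero => cases m <;> simp [invOneSubPow_zero, coeff_one]
  | succ d =>
    rw [invOneSubPow_val_succ_eq_mk_add_choose, coeff_mk, Nat.choose_symm_add]
    congr 2
    omega

theorem Polynomial.coeff_eq_sum_choose_of_one_sub_X_pow_mul_eq {R ι : Type*} [CommRing R]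
    {s : Finset ι} {a : ι → R} {e : ι → ℕ} {k : ℕ} {f : R[X]}
    (h : (1 - X) ^ k * f = ∑ j ∈ s, C (a j) * X ^ e j) (i : ℕ) :
    f.coeff i = ∑ j ∈ s with e j ≤ i, a j * (k + (i - e j) - 1).choose (i - e j) := by
  have hps : (f : PowerSeries R) = ∑ j ∈ s,
      PowerSeries.C (a j) * ((PowerSeries.invOneSubPow R k).val * PowerSeries.X ^ e j) := by
    have h' := congrArg (coeToPowerSeries.ringHom (R := R)) h
    simp only [map_mul, map_pow, map_sub, map_one, map_sum, coeToPowerSeries.ringHom_apply,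
      coe_X, coe_C] at h'
    rw [← one_mul (f : PowerSeries R), ← (PowerSeries.invOneSubPow R k).val_inv, mul_assoc,
      PowerSeries.invOneSubPow_inv_eq_one_sub_pow, h', mul_sum]
    exact sum_congr rfl fun j _ => by ring
  rw [← coeff_coe, hps, map_sum, sum_filter]
  refine sum_congr rfl fun j _ => ?_
  rw [PowerSeries.coeff_C_mul, PowerSeries.coeff_mul_X_pow', PowerSeries.coeff_invOneSubPow_val,
    mul_ite, mul_zero]

theorem integral_pow_pred_mul_pow {a : ℕ} (ha : 0 < a) (b : ℕ) (q u : ℝ) :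
    ∫ t in q..u, t ^ (a - 1) * t ^ b = (u ^ (a + b) - q ^ (a + b)) / (a + b : ℕ) := by
  have hab : a - 1 + b + 1 = a + b := by omega
  simp_rw [← pow_add, integral_pow, hab]
  rw [← Nat.cast_add_one, hab]

lemma beta_le_sum (c : List ℕ) (j : ℕ) : beta c j ≤ c.sum := by
  rw [beta, ← List.sum_take_add_sum_drop c j]
  exact Nat.le_add_right _ _

lemma beta_length (c : List ℕ) : beta c c.length = c.sum := by
  simp [beta]

lemma beta_append_of_le (c : List ℕ) (a : ℕ) {j : ℕ} (h : j ≤ c.length) :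
    beta (c ++ [a]) j = beta c j := by
  rw [beta, List.take_append_of_le_length h, beta]

lemma beta_strictMonoOn {c : List ℕ} (hpos : ∀ a ∈ c, 0 < a) :
    StrictMonoOn (beta c) (Set.Iic c.length) :=
  strictMonoOn_Iic_of_lt_succ fun j hj => by
    simp only [beta, Order.succ_eq_add_one, List.sum_take_succ _ _ hj]
    exact Nat.lt_add_of_pos_right (hpos _ (List.getElem_mem hj))

lemma beta_injOn {c : List ℕ} (hpos : ∀ a ∈ c, 0 < a) :
    Set.InjOn (fun j => (beta c j : ℝ)) (range (c.length + 1)) := by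
  intro i hi j hj h
  simp only [coe_range, Set.mem_Iio, Nat.cast_inj] at hi hj h
  exact (beta_strictMonoOn hpos).injOn (Nat.lt_succ_iff.mp hi) (Nat.lt_succ_iff.mp hj) h

noncomputable def betaWeight (c : List ℕ) (j : ℕ) : ℝ :=
  (∏ l ∈ (range (c.length + 1)).erase j, ((beta c l : ℝ) - beta c j))⁻¹

lemma sum_betaWeight_eq_zero {c : List ℕ} (hpos : ∀ a ∈ c, 0 < a) (hc : c ≠ []) :
    ∑ j ∈ range (c.length + 1), betaWeight c j = 0 :=
  Lagrange.sum_inv_prod_sub_eq_zero (beta_injOn hpos)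
    (by simpa [List.length_pos_iff] using hc)

lemma betaWeight_append (c : List ℕ) (a : ℕ) {j : ℕ} (hj : j ≤ c.length) :
    betaWeight (c ++ [a]) j = betaWeight c j / ((c.sum + a : ℕ) - beta c j : ℝ) := by
  have hbeta : ∀ l ∈ (range (c.length + 1)).erase j,
      ((beta (c ++ [a]) l : ℝ) - beta (c ++ [a]) j) = (beta c l : ℝ) - beta c j := by
    intro l hl
    rw [beta_append_of_le c a (Nat.lt_succ_iff.mp (mem_range.mp (mem_of_mem_erase hl))),
      beta_append_of_le c a hj]
  have hlast : beta (c ++ [a]) (c.length + 1) = c.sum + a := by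
    simpa using beta_length (c ++ [a])
  rw [betaWeight, List.length_append, List.length_singleton, range_add_one,
    erase_insert_of_ne (by omega), prod_insert (by simp), prod_congr rfl hbeta, hlast,
    beta_append_of_le c a hj, betaWeight, mul_inv, div_eq_mul_inv, mul_comm]

noncomputable def gClosedForm (c : List ℕ) (q u : ℝ) : ℝ :=
  ∑ j ∈ range (c.length + 1), betaWeight c j * q ^ beta c j * u ^ (c.sum - beta c j)

lemma integral_pow_mul_gClosedForm {c : List ℕ} {a : ℕ} (hpos : ∀ x ∈ c ++ [a], 0 < x)
    (q u : ℝ) :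
    ∫ t in q..u, t ^ (a - 1) * gClosedForm c q t = gClosedForm (c ++ [a]) q u := by
  set N := (c ++ [a]).sum
  have hN : N = c.sum + a := by simp [N]
  have hterm : ∀ j ∈ range (c.length + 1),
      ∫ t in q..u, t ^ (a - 1) * (betaWeight c j * q ^ beta c j * t ^ (c.sum - beta c j)) =
        betaWeight (c ++ [a]) j * q ^ beta (c ++ [a]) j * u ^ (N - beta (c ++ [a]) j) -
          betaWeight (c ++ [a]) j * q ^ N := by
    intro j hj
    have hjk : j ≤ c.length := Nat.lt_succ_iff.mp (mem_range.mp hj)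
    have hle : beta c j ≤ c.sum := beta_le_sum c j
    have hexp : a + (c.sum - beta c j) = N - beta c j := by omega
    have hq : q ^ N = q ^ beta c j * q ^ (N - beta c j) := by
      rw [← pow_add, Nat.add_sub_cancel' (by omega)]
    simp_rw [mul_left_comm (_ ^ (a - 1)), intervalIntegral.integral_const_mul,
      integral_pow_pred_mul_pow (hpos a (by simp)), hexp]
    rw [beta_append_of_le c a hjk, betaWeight_append c a hjk, ← hN, hq,
      Nat.cast_sub (by omega)]
    ring
  calc ∫ t in q..u, t ^ (a - 1) * gClosedForm c q t
      = ∑ j ∈ range (c.length + 1),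
          ∫ t in q..u, t ^ (a - 1) * (betaWeight c j * q ^ beta c j * t ^ (c.sum - beta c j)) := by
        simp only [gClosedForm, mul_sum]
        exact intervalIntegral.integral_finsetSum fun j _ =>
          (Continuous.intervalIntegrable (by fun_prop) _ _)
    _ = ∑ j ∈ range (c.length + 1),
          (betaWeight (c ++ [a]) j * q ^ beta (c ++ [a]) j * u ^ (N - beta (c ++ [a]) j) -
            betaWeight (c ++ [a]) j * q ^ N) := sum_congr rfl hterm
    _ = gClosedForm (c ++ [a]) q u := by
        have hw := sum_betaWeight_eq_zero hpos (by simp)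
        have hlen : (c ++ [a]).length = c.length + 1 := by simp
        rw [sum_range_succ, hlen] at hw
        rw [sum_sub_distrib, ← sum_mul, gClosedForm, sum_range_succ _ (c ++ [a]).length,
          beta_length, Nat.sub_self, pow_zero, hlen]
        linear_combination (-q ^ N) * hw

lemma gAux_reverse_eq_gClosedForm {c : List ℕ} (hpos : ∀ a ∈ c, 0 < a) (q u : ℝ) :
    gAux c.reverse q u = gClosedForm c q u := by
  induction c using List.reverseRecOn generalizing u with
  | nil => simp [gAux, gClosedForm, betaWeight, beta]
  | append_singleton c a ih =>
    simp only [List.reverse_append, List.reverse_singleton, List.singleton_append, gAux]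
    simp_rw [ih fun x hx => hpos x (List.mem_append_left _ hx)]
    exact integral_pow_mul_gClosedForm hpos q u

lemma gcomp_eq_eval {c : List ℕ} (hpos : ∀ a ∈ c, 0 < a) (q : ℝ) :
    gcomp c q = (∑ j ∈ range (c.length + 1), C (betaWeight c j) * X ^ beta c j).eval q := by
  simp [gcomp, gAux_reverse_eq_gClosedForm hpos, gClosedForm, eval_finsetSum]

theorem reduced_composition_polynomial_coeffs_general (c : List ℕ) (hpos : ∀ a ∈ c, 0 < a)
    (f : Polynomial ℝ)
    (hf : ∀ q : ℝ, gcomp c q = (1 - q) ^ c.length * f.eval q) :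
    ∀ i ≤ c.sum - c.length, f.coeff i =
      ∑ j ∈ (Finset.range (c.length + 1)).filter (fun j => beta c j ≤ i),
        (1 / ∏ l ∈ (Finset.range (c.length + 1)).erase j,
            ((beta c l : ℝ) - (beta c j : ℝ))) *
          (Nat.choose (c.length + (i - beta c j) - 1) (i - beta c j) : ℝ) := by
  intro i _
  have h : (1 - X) ^ c.length * f =
      ∑ j ∈ range (c.length + 1), C (betaWeight c j) * X ^ beta c j :=
    Polynomial.funext fun q => by simp [← gcomp_eq_eval hpos, hf q]
  simp only [coeff_eq_sum_choose_of_one_sub_X_pow_mul_eq h i, betaWeight, one_div]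

/-- Theorem: the coefficients `f_i` of the reduced composition polynomial
`f_c(q) = Σ_{i=0}^{n−k} f_i q^i` (where `g_c(q) = (1−q)^k f_c(q)`) are given by
`f_i = Σ_{j : β_j ≤ i} (1/∏_{l≠j}(β_l − β_j)) · C(k + (i − β_j) − 1, i − β_j)`. -/
theorem reduced_composition_polynomial_coeffs (c : List ℕ) (hpos : ∀ a ∈ c, 0 < a)
    (f : Polynomial ℝ) (hdeg : f.natDegree = c.sum - c.length)
    (hf : ∀ q : ℝ, gcomp c q = (1 - q) ^ c.length * f.eval q) :
    ∀ i ≤ c.sum - c.length, f.coeff i =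
      ∑ j ∈ (Finset.range (c.length + 1)).filter (fun j => beta c j ≤ i),
        (1 / ∏ l ∈ (Finset.range (c.length + 1)).erase j,
            ((beta c l : ℝ) - (beta c j : ℝ))) *
          (Nat.choose (c.length + (i - beta c j) - 1) (i - beta c j) : ℝ) :=
  reduced_composition_polynomial_coeffs_general c hpos f hf
end
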